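/- arXiv:1002.4127 — 5 statements merged into one kernel-verified Lean document; each statement's English description precedes it below -/
import Mathlib

section
/- Let l be a nonnegative integer, x ≥ 1 a real number, and s a complex number with |s| ≤ 1/log x (for x > 1; for x near 1 interpret suitably). Then the sum over positive integers n ≤ x of n^{-(1+s)} (log(x/n))^l equals (log x)^{l+1} x^{-s} ∫₀¹ x^{s a} a^l da + O((log 3x)^l), where the implied constant depends only on l. -/
open Complex MeasureTheory intervalIntegral

/-!
Write `f t = t ^ (-(1 + s)) * (log (x / t)) ^ l`. Abel summation against the coefficients
`1_{n ≥ 1}`, whose partial sums are `⌊t⌋`, followed by an integration by parts of `∫ f`, gives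
Euler's formula `∑_{1 ≤ n ≤ x} f n - ∫₁ˣ f = f 1 - {x} f x + ∫₁ˣ {t} f' t`. On `[1, x]` the
hypothesis `‖s‖ log x ≤ 1` gives `|t ^ (-s)| ≤ e`, hence `|f| ≤ e (log x) ^ l` and
`|f' t| ≤ e ((1 + ‖s‖) (log x) ^ l + l (log x) ^ (l - 1)) / t ^ 2`; integrating `t ^ (-2)` produces
the factor `1 - 1 / x ≤ log x`, which absorbs `‖s‖`. The main term `∫₁ˣ f` becomes
`(log x) ^ (l + 1) x ^ (-s) ∫₀¹ x ^ (s a) a ^ l da` under the substitution `t = x ^ (1 - a)`.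
-/

theorem sum_Icc_one_floor_sub_integral_eq {𝕜 : Type*} [RCLike 𝕜] {f f' : ℝ → 𝕜} {b : ℝ}
    (hb : 1 ≤ b) (hf : ∀ t ∈ Set.Icc 1 b, HasDerivAt f (f' t) t)
    (hf' : IntegrableOn f' (Set.Icc 1 b)) :
    ∑ n ∈ Finset.Icc 1 ⌊b⌋₊, f n - ∫ t in 1..b, f t
      = f 1 - ((b - ⌊b⌋₊ : ℝ) : 𝕜) * f b + ∫ t in 1..b, ((t - ⌊t⌋₊ : ℝ) : 𝕜) * f' t := by
  set c : ℕ → 𝕜 := fun k => if k = 0 then 0 else 1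
  have hc : ∀ m : ℕ, ∑ k ∈ Finset.Icc 0 m, c k = m := by
    intro m
    simp [c, Finset.sum_ite, Finset.filter_ne']
  have hderiv : Set.EqOn (deriv f) f' (Set.Icc 1 b) := fun t ht => (hf t ht).deriv
  have habel := sum_mul_eq_sub_integral_mul₀ c (if_pos rfl) b
    (fun t ht => (hf t ht).differentiableAt) (hf'.congr_fun hderiv.symm measurableSet_Icc)
  have hsum : ∑ k ∈ Finset.Icc 0 ⌊b⌋₊, f k * c k = ∑ n ∈ Finset.Icc 1 ⌊b⌋₊, f n := by
    rw [Finset.Icc_eq_cons_Ioc (Nat.zero_le _), Finset.sum_cons, ← Finset.Icc_add_one_left_eq_Ioc]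
    simp only [c, if_pos, Nat.cast_zero, mul_zero, zero_add]
    exact Finset.sum_congr rfl fun n hn => by
      simp [Nat.one_le_iff_ne_zero.mp (Finset.mem_Icc.mp hn).1]
  have hfloor : ∫ t in Set.Ioc 1 b, deriv f t * ∑ k ∈ Finset.Icc 0 ⌊t⌋₊, c k
      = ∫ t in 1..b, f' t * (⌊t⌋₊ : 𝕜) := by
    rw [integral_of_le hb]
    refine setIntegral_congr_fun measurableSet_Ioc fun t ht => ?_
    rw [hc, hderiv (Set.Ioc_subset_Icc_self ht)]
  rw [hsum, hc, hfloor] at habel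
  have hIcc : Set.uIcc 1 b = Set.Icc 1 b := Set.uIcc_of_le hb
  have hf'_int : IntervalIntegrable f' volume 1 b := by
    rwa [intervalIntegrable_iff_integrableOn_Icc_of_le hb]
  have hparts := integral_mul_deriv_eq_deriv_mul (u := fun t : ℝ => (t : 𝕜)) (u' := fun _ => 1)
    (fun t _ => by simpa using (RCLike.ofRealCLM (K := 𝕜)).hasDerivAt (x := t))
    (fun t ht => hf t (hIcc ▸ ht)) intervalIntegrable_const hf'_int
  have hfloor_int : IntervalIntegrable (fun t => f' t * (⌊t⌋₊ : 𝕜)) volume 1 b := by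
    rw [intervalIntegrable_iff_integrableOn_Icc_of_le hb]
    simpa only [hc] using integrableOn_mul_sum_Icc c (m := 0) zero_le_one hf'
  have hid_int : IntervalIntegrable (fun t => (t : 𝕜) * f' t) volume 1 b :=
    hf'_int.continuousOn_mul (RCLike.continuous_ofReal.continuousOn)
  have hsplit : ∫ t in 1..b, ((t - ⌊t⌋₊ : ℝ) : 𝕜) * f' t
      = (∫ t in 1..b, (t : 𝕜) * f' t) - ∫ t in 1..b, f' t * (⌊t⌋₊ : 𝕜) := by
    rw [← integral_sub hid_int hfloor_int]
    congr 1 with t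
    push_cast
    ring
  simp only [one_mul, RCLike.ofReal_one] at hparts
  rw [habel, hsplit, hparts]
  push_cast
  ring

theorem norm_sum_Icc_one_floor_sub_integral_le {𝕜 : Type*} [RCLike 𝕜] {f f' : ℝ → 𝕜} {b : ℝ}
    (hb : 1 ≤ b) (hf : ∀ t ∈ Set.Icc 1 b, HasDerivAt f (f' t) t)
    (hf' : IntegrableOn f' (Set.Icc 1 b)) :
    ‖∑ n ∈ Finset.Icc 1 ⌊b⌋₊, f n - ∫ t in 1..b, f t‖
      ≤ ‖f 1‖ + ‖f b‖ + ∫ t in 1..b, ‖f' t‖ := by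
  have hfract : ∀ t : ℝ, 0 ≤ t → ‖((t - ⌊t⌋₊ : ℝ) : 𝕜)‖ ≤ 1 := fun t ht => by
    rw [RCLike.norm_ofReal, abs_of_nonneg (sub_nonneg.mpr (Nat.floor_le ht))]
    linarith [Nat.lt_floor_add_one t]
  have hboundary : ‖((b - ⌊b⌋₊ : ℝ) : 𝕜) * f b‖ ≤ ‖f b‖ := by
    rw [norm_mul]
    exact mul_le_of_le_one_left (norm_nonneg _) (hfract b (by linarith))
  have hintegral : ‖∫ t in 1..b, ((t - ⌊t⌋₊ : ℝ) : 𝕜) * f' t‖ ≤ ∫ t in 1..b, ‖f' t‖ := by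
    refine norm_integral_le_of_norm_le hb (Filter.Eventually.of_forall fun t ht => ?_)
      ((intervalIntegrable_iff_integrableOn_Icc_of_le hb).mpr hf'.norm)
    rw [norm_mul]
    exact mul_le_of_le_one_left (norm_nonneg _) (hfract t (by linarith [ht.1]))
  rw [sum_Icc_one_floor_sub_integral_eq hb hf hf']
  calc _ ≤ ‖f 1‖ + ‖((b - ⌊b⌋₊ : ℝ) : 𝕜) * f b‖ + ‖∫ t in 1..b, ((t - ⌊t⌋₊ : ℝ) : 𝕜) * f' t‖ :=
        (norm_add_le _ _).trans (by gcongr; exact norm_sub_le _ _)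
    _ ≤ _ := by gcongr

theorem integral_inv_sq_one {x : ℝ} (hx : 1 ≤ x) : ∫ t in 1..x, (t ^ 2)⁻¹ = 1 - x⁻¹ := by
  have hderiv : ∀ t ∈ Set.uIcc 1 x, HasDerivAt (fun y : ℝ => -y⁻¹) (t ^ 2)⁻¹ t := fun t ht => by
    simpa using (hasDerivAt_inv (by linarith [(Set.uIcc_of_le hx ▸ ht).1] : t ≠ 0)).fun_neg
  rw [integral_eq_sub_of_hasDerivAt hderiv]
  · ring
  · refine ((continuous_pow 2).continuousOn.inv₀ fun t ht => ?_).intervalIntegrable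
    have : 1 ≤ t := (Set.uIcc_of_le hx ▸ ht).1
    positivity

theorem ofReal_cpow_eq_exp {x : ℝ} (hx : 0 < x) (w : ℂ) :
    (x : ℂ) ^ w = exp (Real.log x * w) := by
  rw [cpow_def_of_ne_zero (ofReal_ne_zero.mpr hx.ne'), ofReal_log hx.le]

noncomputable def logPowTerm (x : ℝ) (s : ℂ) (l : ℕ) (t : ℝ) : ℂ :=
  (t : ℂ) ^ (-(1 + s)) * (Real.log (x / t) : ℂ) ^ l

noncomputable def logPowTermDeriv (x : ℝ) (s : ℂ) (l : ℕ) (t : ℝ) : ℂ :=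
  -(t : ℂ) ^ (-(2 + s)) *
    ((1 + s) * (Real.log (x / t) : ℂ) ^ l + l * (Real.log (x / t) : ℂ) ^ (l - 1))

section

variable {x : ℝ} {s : ℂ} (l : ℕ) {t : ℝ}

theorem hasDerivAt_log_div (hx : x ≠ 0) (ht : t ≠ 0) :
    HasDerivAt (fun t => Real.log (x / t)) (-t⁻¹) t := by
  have h := ((hasDerivAt_inv ht).const_mul x).log (mul_ne_zero hx (inv_ne_zero ht))
  simp only [← div_eq_mul_inv] at h
  convert h using 1
  field_simp

theorem hasDerivAt_logPowTerm (hx : x ≠ 0) (ht : 0 < t) :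
    HasDerivAt (logPowTerm x s l) (logPowTermDeriv x s l t) t := by
  have hpow : HasDerivAt (fun t : ℝ => (t : ℂ) ^ (-(1 + s)))
      (-(1 + s) * (t : ℂ) ^ (-(1 + s) - 1)) t :=
    (hasStrictDerivAt_cpow_const (ofReal_mem_slitPlane.mpr ht)).hasDerivAt.comp_ofReal
  have hlog := ((hasDerivAt_log_div hx ht.ne').ofReal_comp).pow l
  have htC : (t : ℂ) ≠ 0 := ofReal_ne_zero.mpr ht.ne'
  refine (hpow.mul hlog).congr_deriv ?_
  rw [logPowTermDeriv, show -(2 + s) = -(1 + s) - 1 by ring, cpow_sub _ _ htC, cpow_one]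
  simp only [Pi.pow_apply]
  push_cast
  field_simp
  ring

theorem continuousOn_logPowTermDeriv (hx : x ≠ 0) :
    ContinuousOn (logPowTermDeriv x s l) (Set.Ioi 0) := by
  have hcpow : ∀ w : ℂ, ContinuousOn (fun t : ℝ => (t : ℂ) ^ w) (Set.Ioi 0) := fun w t ht =>
    ((continuousAt_cpow_const (ofReal_mem_slitPlane.mpr ht)).comp
      continuous_ofReal.continuousAt).continuousWithinAt
  have hlog : ContinuousOn (fun t : ℝ => (Real.log (x / t) : ℂ)) (Set.Ioi 0) := fun t ht =>
    (continuous_ofReal.continuousAt.comp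
      (hasDerivAt_log_div hx (ne_of_gt ht)).continuousAt).continuousWithinAt
  unfold logPowTermDeriv
  fun_prop (disch := assumption)

theorem norm_ofReal_cpow_neg_le (hs : ‖s‖ * Real.log x ≤ 1) (ht : 1 ≤ t) (htx : t ≤ x)
    (n : ℕ) :
    ‖(t : ℂ) ^ (-(n + s))‖ ≤ Real.exp 1 / t ^ n := by
  have ht0 : 0 < t := zero_lt_one.trans_le ht
  have hre : t ^ (-s.re) ≤ Real.exp 1 := by
    rw [Real.rpow_def_of_pos ht0, Real.exp_le_exp]
    calc Real.log t * -s.re ≤ Real.log t * ‖s‖ := by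
          gcongr
          · exact Real.log_nonneg ht
          · exact (neg_le_abs _).trans (abs_re_le_norm s)
      _ ≤ ‖s‖ * Real.log x := by
          rw [mul_comm]; gcongr
      _ ≤ 1 := hs
  rw [norm_cpow_eq_rpow_re_of_pos ht0]
  simp only [neg_add_rev, add_re, neg_re, natCast_re]
  rw [Real.rpow_add ht0, Real.rpow_neg ht0.le (n : ℝ), Real.rpow_natCast, ← div_eq_mul_inv]
  gcongr

theorem norm_log_div_le (ht : 1 ≤ t) (htx : t ≤ x) :
    ‖(Real.log (x / t) : ℂ)‖ ≤ Real.log x := by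
  have ht0 : 0 < t := zero_lt_one.trans_le ht
  rw [norm_real, Real.norm_eq_abs, abs_of_nonneg (Real.log_nonneg ((one_le_div ht0).mpr htx))]
  exact Real.log_le_log (div_pos (ht0.trans_le htx) ht0) (div_le_self (ht0.trans_le htx).le ht)

theorem norm_logPowTerm_le (hs : ‖s‖ * Real.log x ≤ 1) (ht : 1 ≤ t) (htx : t ≤ x) :
    ‖logPowTerm x s l t‖ ≤ Real.exp 1 * Real.log x ^ l := by
  have hpow : ‖(t : ℂ) ^ (-(1 + s))‖ ≤ Real.exp 1 := by
    simpa using (norm_ofReal_cpow_neg_le hs ht htx 1).trans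
      (div_le_self (Real.exp_pos 1).le (by simpa using ht))
  rw [logPowTerm, norm_mul, norm_pow]
  gcongr
  exact norm_log_div_le ht htx

theorem norm_logPowTermDeriv_le (hs : ‖s‖ * Real.log x ≤ 1) (ht : 1 ≤ t) (htx : t ≤ x) :
    ‖logPowTermDeriv x s l t‖
      ≤ Real.exp 1 * ((1 + ‖s‖) * Real.log x ^ l + l * Real.log x ^ (l - 1)) / t ^ 2 := by
  have hpow : ‖(t : ℂ) ^ (-(2 + s))‖ ≤ Real.exp 1 / t ^ 2 := by
    simpa using norm_ofReal_cpow_neg_le hs ht htx 2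
  have hlog := norm_log_div_le ht htx
  rw [logPowTermDeriv, norm_mul, norm_neg, mul_div_right_comm]
  gcongr
  calc _ ≤ ‖1 + s‖ * ‖(Real.log (x / t) : ℂ)‖ ^ l
          + l * ‖(Real.log (x / t) : ℂ)‖ ^ (l - 1) :=
        (norm_add_le _ _).trans_eq (by simp only [norm_mul, norm_pow, norm_natCast])
    _ ≤ _ := by gcongr; exact (norm_add_le 1 s).trans (by simp)

theorem integral_norm_logPowTermDeriv_le (hx : 1 ≤ x) (hs : ‖s‖ * Real.log x ≤ 1) :
    ∫ t in 1..x, ‖logPowTermDeriv x s l t‖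
      ≤ Real.exp 1 * ((1 + ‖s‖) * Real.log x ^ l + l * Real.log x ^ (l - 1)) * (1 - x⁻¹) := by
  set K := Real.exp 1 * ((1 + ‖s‖) * Real.log x ^ l + l * Real.log x ^ (l - 1))
  have hpos : Set.uIcc 1 x ⊆ Set.Ioi 0 := fun t ht =>
    zero_lt_one.trans_le (Set.uIcc_of_le hx ▸ ht).1
  have hK : ∫ t in 1..x, K / t ^ 2 = K * (1 - x⁻¹) := by
    simp_rw [div_eq_mul_inv, intervalIntegral.integral_const_mul, integral_inv_sq_one hx]
  rw [← hK]
  refine integral_mono_on hx ?_ ?_ fun t ht => norm_logPowTermDeriv_le l hs ht.1 ht.2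
  · exact ((continuousOn_logPowTermDeriv l (by positivity)).mono hpos).norm.intervalIntegrable
  · exact (continuousOn_const.div (continuous_pow 2).continuousOn
      fun t ht => pow_ne_zero 2 (hpos ht).ne').intervalIntegrable

theorem integral_logPowTerm (hx : 0 < x) :
    ∫ t in 1..x, logPowTerm x s l t
      = (Real.log x : ℂ) ^ (l + 1) * (x : ℂ) ^ (-s)
          * ∫ a in 0..1, (x : ℂ) ^ (s * a) * (a : ℂ) ^ l := by
  set L := Real.log x
  set φ : ℝ → ℝ := fun a => Real.exp (L * (1 - a))
  have hφ : ∀ a ∈ Set.uIcc (0 : ℝ) 1, HasDerivAt φ (-(L * φ a)) a := fun a _ => by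
    simpa [φ, mul_comm] using ((((hasDerivAt_id a).const_sub 1).const_mul L).exp)
  have hφ' : ContinuousOn (fun a => -(L * φ a)) (Set.uIcc 0 1) := by fun_prop
  have hf : ContinuousOn (logPowTerm x s l) (φ '' Set.uIcc 0 1) := by
    rintro _ ⟨a, -, rfl⟩
    exact (hasDerivAt_logPowTerm l hx.ne' (Real.exp_pos _)).continuousAt.continuousWithinAt
  have hsubst := integral_deriv_smul_comp' hφ hφ' hf
  have hφ0 : φ 0 = x := by simp [φ, L, Real.exp_log hx]
  have hφ1 : φ 1 = 1 := by simp [φ]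
  rw [hφ0, hφ1] at hsubst
  rw [integral_symm, ← hsubst, ← intervalIntegral.integral_const_mul,
    ← intervalIntegral.integral_neg]
  refine integral_congr fun a _ => ?_
  have hlog : Real.log (x / φ a) = L * a := by
    rw [Real.log_div hx.ne' (Real.exp_pos _).ne', Real.log_exp]; ring
  have hexp : (φ a : ℂ) * (φ a : ℂ) ^ (-(1 + s)) = (x : ℂ) ^ (-s) * (x : ℂ) ^ (s * a) := by
    rw [ofReal_cpow_eq_exp (Real.exp_pos _), ofReal_cpow_eq_exp hx, ofReal_cpow_eq_exp hx,
      Real.log_exp, ofReal_exp, ← Complex.exp_add, ← Complex.exp_add]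
    congr 1
    push_cast
    ring
  simp only [Function.comp_apply, logPowTerm, hlog, real_smul]
  push_cast
  linear_combination (L : ℂ) ^ (l + 1) * (a : ℂ) ^ l * hexp

theorem norm_sum_logPowTerm_sub_integral_le (hx : 1 ≤ x) (hs : ‖s‖ * Real.log x ≤ 1) :
    ‖∑ n ∈ Finset.Icc 1 ⌊x⌋₊, logPowTerm x s l n - ∫ t in 1..x, logPowTerm x s l t‖
      ≤ Real.exp 1 * (l + 4) * Real.log (3 * x) ^ l := by
  have hx0 : 0 < x := zero_lt_one.trans_le hx
  have hderiv : ∀ t ∈ Set.Icc 1 x, HasDerivAt (logPowTerm x s l) (logPowTermDeriv x s l t) t :=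
    fun t ht => hasDerivAt_logPowTerm l hx0.ne' (zero_lt_one.trans_le ht.1)
  have hint : IntegrableOn (logPowTermDeriv x s l) (Set.Icc 1 x) :=
    ((continuousOn_logPowTermDeriv l hx0.ne').mono fun t ht =>
      zero_lt_one.trans_le ht.1).integrableOn_Icc
  refine (norm_sum_Icc_one_floor_sub_integral_le hx hderiv hint).trans ?_
  set L := Real.log x
  set M := Real.log (3 * x)
  set u := 1 - x⁻¹
  have hL : 0 ≤ L := Real.log_nonneg hx
  have hLM : L ≤ M := Real.log_le_log hx0 (by linarith)
  have hM : 1 ≤ M := by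
    rw [Real.le_log_iff_exp_le (by positivity)]
    linarith [Real.exp_one_lt_d9]
  have hu1 : u ≤ 1 := by simp [u, hx0.le]
  have hsu : ‖s‖ * u ≤ 1 :=
    (mul_le_mul_of_nonneg_left (Real.one_sub_inv_le_log_of_pos hx0) (norm_nonneg s)).trans hs
  have hpow : L ^ l ≤ M ^ l := pow_le_pow_left₀ hL hLM l
  have hpow' : L ^ (l - 1) ≤ M ^ l :=
    (pow_le_pow_left₀ hL hLM _).trans (pow_le_pow_right₀ hM (Nat.sub_le l 1))
  calc _ ≤ Real.exp 1 * L ^ l + Real.exp 1 * L ^ l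
        + Real.exp 1 * ((1 + ‖s‖) * L ^ l + l * L ^ (l - 1)) * u :=
        add_le_add (add_le_add (norm_logPowTerm_le l hs le_rfl hx)
          (norm_logPowTerm_le l hs hx le_rfl)) (integral_norm_logPowTermDeriv_le l hx hs)
    _ = Real.exp 1 * (2 * L ^ l + u * L ^ l + (‖s‖ * u) * L ^ l + l * (u * L ^ (l - 1))) :=
        by ring
    _ ≤ Real.exp 1 * (2 * M ^ l + 1 * M ^ l + 1 * M ^ l + l * (1 * M ^ l)) := by gcongr
    _ = Real.exp 1 * (l + 4) * M ^ l := by ring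

end

theorem stmt0 (l : ℕ) :
    ∃ C : ℝ, 0 < C ∧ ∀ (x : ℝ) (s : ℂ), 1 ≤ x → ‖s‖ * Real.log x ≤ 1 →
      ‖(∑ n ∈ Finset.Icc 1 ⌊x⌋₊, (n : ℂ) ^ (-(1 + s)) * (Real.log (x / n)) ^ l)
        - (Real.log x) ^ (l + 1) * (x : ℂ) ^ (-s) *
            ∫ a in (0:ℝ)..1, (x : ℂ) ^ (s * a) * (a : ℂ) ^ l‖
        ≤ C * (Real.log (3 * x)) ^ l := by
  refine ⟨Real.exp 1 * (l + 4), by positivity, fun x s hx hs => ?_⟩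
  rw [← integral_logPowTerm l (zero_lt_one.trans_le hx)]
  simpa [logPowTerm] using norm_sum_logPowTerm_sub_integral_le l hx hs
end

section
/- Let k ≥ 1 be an integer and let d_k(n) denote the number of ways of writing n as an ordered product of k positive integers. Suppose -1 ≤ σ ≤ 0 and x ≥ 1. Then ∑_{n ≤ x} (d_k(n)/n) (x/n)^σ ≪_k (log 3x)^{k-1} · min(|σ|^{-1}, log 3x), with the convention that min(|σ|^{-1}, log 3x) = log 3x when σ = 0. -/
/-!
Since `d_{k+1} = 1 * d_k`, swapping the order of summation gives, for completely multiplicative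
`w`, `∑_{n ≤ N} d_{k+1}(n) w(n) = ∑_{m ≤ N} d_k(m) w(m) ∑_{l ≤ N/m} w(l)`.
With `w(n) = 1/n` the inner sum is at most `1 + log N`, so `∑_{n ≤ N} d_k(n)/n ≤ (1 + log N)^k`;
as `(x/n)^σ ≤ 1` this already gives the bound `(log 3x)^k`.
For `σ = -s < 0` take `w(n) = n^(s-1)`: concavity of `t ↦ t^s` gives `s ∑_{l ≤ M} l^(s-1) ≤ M^s`,
so the inner sum costs only a factor `(N/m)^s / s`, and the whole sum is at most
`(1 + log x)^(k-1) / s`.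
-/

/-- The `k`-fold divisor function: number of ways of writing `n` as an ordered
product of `k` positive integers. -/
def dk : ℕ → ℕ → ℕ
  | 0, n => if n = 1 then 1 else 0
  | (k + 1), n => ∑ d ∈ n.divisors, dk k (n / d)

open Finset Real

lemma dk_succ_apply (k n : ℕ) : dk (k + 1) n = ∑ p ∈ n.divisorsAntidiagonal, dk k p.2 := by
  rw [Nat.sum_divisorsAntidiagonal (fun _ b => dk k b)]
  rfl

lemma sum_Icc_sum_divisorsAntidiagonal {M : Type*} [AddCommMonoid M] (g : ℕ → ℕ → M) (N : ℕ) :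
    ∑ n ∈ Icc 1 N, ∑ p ∈ n.divisorsAntidiagonal, g p.1 p.2
      = ∑ m ∈ Icc 1 N, ∑ l ∈ Icc 1 (N / m), g l m := by
  set P := (Icc 1 N ×ˢ Icc 1 N).filter (fun p => p.1 * p.2 ≤ N)
  have hfiber : ∀ n ∈ Icc 1 N, n.divisorsAntidiagonal = P.filter (fun p => p.1 * p.2 = n) := by
    intro n hn
    ext ⟨a, b⟩
    simp only [mem_Icc] at hn
    simp only [Nat.mem_divisorsAntidiagonal, mem_filter, mem_product, mem_Icc, P]
    constructor
    · rintro ⟨rfl, -⟩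
      have hab : 0 < a * b := by omega
      have ha : 0 < a := Nat.pos_of_mul_pos_right hab
      have hb : 0 < b := Nat.pos_of_mul_pos_left hab
      have := Nat.le_mul_of_pos_right a hb
      have := Nat.le_mul_of_pos_left b ha
      omega
    · rintro ⟨-, rfl⟩
      exact ⟨rfl, by omega⟩
  have hcol : ∀ m ∈ Icc 1 N, (Icc 1 N).filter (fun l => l * m ≤ N) = Icc 1 (N / m) := by
    intro m hm
    simp only [mem_Icc] at hm
    ext l
    simp only [mem_filter, mem_Icc, Nat.le_div_iff_mul_le (by omega : 0 < m)]
    constructor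
    · rintro ⟨⟨h1, -⟩, h⟩; exact ⟨h1, h⟩
    · rintro ⟨h1, h⟩; exact ⟨⟨h1, (Nat.le_mul_of_pos_right l hm.1).trans h⟩, h⟩
  calc ∑ n ∈ Icc 1 N, ∑ p ∈ n.divisorsAntidiagonal, g p.1 p.2
      = ∑ n ∈ Icc 1 N, ∑ p ∈ P with p.1 * p.2 = n, g p.1 p.2 :=
        sum_congr rfl fun n hn => by rw [hfiber n hn]
    _ = ∑ p ∈ P, g p.1 p.2 := sum_fiberwise_of_maps_to (fun p hp => by
        simp only [mem_filter, mem_product, mem_Icc, P] at hp ⊢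
        exact ⟨by nlinarith, hp.2⟩) _
    _ = ∑ m ∈ Icc 1 N, ∑ l ∈ Icc 1 N with l * m ≤ N, g l m := by
        rw [sum_filter, sum_product_right]
        simp_rw [sum_filter]
    _ = ∑ m ∈ Icc 1 N, ∑ l ∈ Icc 1 (N / m), g l m :=
        sum_congr rfl fun m hm => by rw [hcol m hm]

lemma sum_dk_succ_mul {R : Type*} [CommSemiring R] (k N : ℕ) (w : ℕ → R)
    (hw : ∀ l m, w (l * m) = w l * w m) :
    ∑ n ∈ Icc 1 N, (dk (k + 1) n : R) * w n
      = ∑ m ∈ Icc 1 N, (dk k m : R) * w m * ∑ l ∈ Icc 1 (N / m), w l := by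
  have hterm : ∀ n, (dk (k + 1) n : R) * w n
      = ∑ p ∈ n.divisorsAntidiagonal, w p.1 * ((dk k p.2 : R) * w p.2) := by
    intro n
    rw [dk_succ_apply, Nat.cast_sum, sum_mul]
    refine sum_congr rfl fun p hp => ?_
    rw [← (Nat.mem_divisorsAntidiagonal.mp hp).1, hw]
    ring
  simp_rw [hterm, sum_Icc_sum_divisorsAntidiagonal (fun l m => w l * ((dk k m : R) * w m)), mul_sum]
  exact sum_congr rfl fun _ _ => sum_congr rfl fun _ _ => mul_comm _ _

lemma sum_Icc_inv_le_one_add_log (M : ℕ) : ∑ l ∈ Icc 1 M, (l : ℝ)⁻¹ ≤ 1 + log M := by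
  simpa [harmonic_eq_sum_Icc] using harmonic_le_one_add_log M

lemma sum_dk_div_le (k N : ℕ) : ∑ n ∈ Icc 1 N, (dk k n : ℝ) / n ≤ (1 + log N) ^ k := by
  induction k with
  | zero =>
    simp only [dk, Nat.cast_ite, Nat.cast_one, Nat.cast_zero, ite_div, zero_div, sum_ite_eq',
      pow_zero]
    split_ifs <;> simp
  | succ k ih =>
    simp_rw [div_eq_mul_inv]
    rw [sum_dk_succ_mul k N (fun n => (n : ℝ)⁻¹) (fun l m => by push_cast; rw [mul_inv]), pow_succ]
    calc ∑ m ∈ Icc 1 N, (dk k m : ℝ) * (m : ℝ)⁻¹ * ∑ l ∈ Icc 1 (N / m), (l : ℝ)⁻¹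
        ≤ ∑ m ∈ Icc 1 N, (dk k m : ℝ) * (m : ℝ)⁻¹ * (1 + log N) := by
          gcongr with m
          refine le_trans ?_ (sum_Icc_inv_le_one_add_log N)
          exact sum_le_sum_of_subset_of_nonneg (Icc_subset_Icc_right (Nat.div_le_self N m))
            fun _ _ _ => by positivity
      _ ≤ (1 + log N) ^ k * (1 + log N) := by
          rw [← sum_mul]
          gcongr
          simpa [div_eq_mul_inv] using ih

lemma mul_rpow_sub_one_mul_sub_le {s t u : ℝ} (hs0 : 0 ≤ s) (hs1 : s ≤ 1) (ht : 0 < t)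
    (hu : 0 ≤ u) : s * t ^ (s - 1) * (t - u) ≤ t ^ s - u ^ s := by
  have hbern := rpow_one_add_le_one_add_mul_self (s := u / t - 1)
    (by linarith [div_nonneg hu ht.le]) hs0 hs1
  rw [add_sub_cancel] at hbern
  have hu' : u ^ s = t ^ s * (u / t) ^ s := by
    rw [← mul_rpow ht.le (by positivity), mul_div_cancel₀ _ ht.ne']
  calc s * t ^ (s - 1) * (t - u) = t ^ s - t ^ s * (1 + s * (u / t - 1)) := by
        rw [rpow_sub_one ht.ne']
        field_simp
        ring
    _ ≤ t ^ s - u ^ s := by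
        rw [hu']
        gcongr

lemma mul_sum_Icc_rpow_sub_one_le {s : ℝ} (hs0 : 0 ≤ s) (hs1 : s ≤ 1) (M : ℕ) :
    s * ∑ l ∈ Icc 1 M, (l : ℝ) ^ (s - 1) ≤ (M : ℝ) ^ s := by
  induction M with
  | zero => simpa using rpow_nonneg le_rfl s
  | succ M ih =>
    rw [sum_Icc_succ_top (by omega), mul_add]
    have := mul_rpow_sub_one_mul_sub_le hs0 hs1 (t := M + 1) (u := M) (by positivity)
      (by positivity)
    push_cast
    linarith

lemma sum_dk_mul_rpow_sub_one_le (k N : ℕ) {s : ℝ} (hs0 : 0 < s) (hs1 : s ≤ 1) :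
    ∑ n ∈ Icc 1 N, (dk (k + 1) n : ℝ) * (n : ℝ) ^ (s - 1) ≤ (N : ℝ) ^ s * (1 + log N) ^ k / s := by
  rw [sum_dk_succ_mul k N (fun n => (n : ℝ) ^ (s - 1))
    (fun l m => by push_cast; exact mul_rpow (by positivity) (by positivity))]
  have hinner : ∀ m ∈ Icc 1 N,
      (m : ℝ) ^ (s - 1) * ∑ l ∈ Icc 1 (N / m), (l : ℝ) ^ (s - 1)
        ≤ (m : ℝ)⁻¹ * ((N : ℝ) ^ s / s) := by
    intro m hm
    have hm0 : (0 : ℝ) < m := by exact_mod_cast (mem_Icc.mp hm).1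
    have hsum : ∑ l ∈ Icc 1 (N / m), (l : ℝ) ^ (s - 1) ≤ ((N : ℝ) / m) ^ s / s := by
      rw [le_div_iff₀' hs0]
      refine (mul_sum_Icc_rpow_sub_one_le hs0.le hs1 _).trans ?_
      gcongr
      exact Nat.cast_div_le
    calc (m : ℝ) ^ (s - 1) * ∑ l ∈ Icc 1 (N / m), (l : ℝ) ^ (s - 1)
        ≤ (m : ℝ) ^ (s - 1) * (((N : ℝ) / m) ^ s / s) := by gcongr
      _ = (m : ℝ)⁻¹ * ((N : ℝ) ^ s / s) := by
        rw [div_rpow (by positivity) hm0.le, rpow_sub_one hm0.ne']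
        field_simp
  calc ∑ m ∈ Icc 1 N, (dk k m : ℝ) * (m : ℝ) ^ (s - 1) * ∑ l ∈ Icc 1 (N / m), (l : ℝ) ^ (s - 1)
      ≤ ∑ m ∈ Icc 1 N, (dk k m : ℝ) * ((m : ℝ)⁻¹ * ((N : ℝ) ^ s / s)) := by
        refine sum_le_sum fun m hm => ?_
        rw [mul_assoc]
        exact mul_le_mul_of_nonneg_left (hinner m hm) (by positivity)
    _ = (∑ m ∈ Icc 1 N, (dk k m : ℝ) / m) * ((N : ℝ) ^ s / s) := by
        rw [sum_mul]
        exact sum_congr rfl fun _ _ => by ring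
    _ ≤ (1 + log N) ^ k * ((N : ℝ) ^ s / s) := by
        gcongr
        exact sum_dk_div_le k N
    _ = (N : ℝ) ^ s * (1 + log N) ^ k / s := by ring

lemma log_natFloor_le {x : ℝ} (hx : 1 ≤ x) : log ⌊x⌋₊ ≤ log x :=
  log_le_log (by exact_mod_cast Nat.floor_pos.mpr hx) (Nat.floor_le (by linarith))

lemma sum_dk_div_mul_rpow_le (k : ℕ) {σ x : ℝ} (hσ : σ ≤ 0) (hx : 1 ≤ x) :
    ∑ n ∈ Icc 1 ⌊x⌋₊, (dk k n : ℝ) / n * (x / n) ^ σ ≤ (1 + log x) ^ k := by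
  calc ∑ n ∈ Icc 1 ⌊x⌋₊, (dk k n : ℝ) / n * (x / n) ^ σ
      ≤ ∑ n ∈ Icc 1 ⌊x⌋₊, (dk k n : ℝ) / n := by
        gcongr with n hn
        refine mul_le_of_le_one_right (by positivity) (rpow_le_one_of_one_le_of_nonpos ?_ hσ)
        have hn1 : (1 : ℝ) ≤ n := by exact_mod_cast (mem_Icc.mp hn).1
        have hnx : (n : ℝ) ≤ x :=
          (Nat.cast_le.mpr (mem_Icc.mp hn).2).trans (Nat.floor_le (by linarith))
        exact (one_le_div (by linarith)).mpr hnx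
    _ ≤ (1 + log ⌊x⌋₊) ^ k := sum_dk_div_le k _
    _ ≤ (1 + log x) ^ k :=
        pow_le_pow_left₀ (by positivity) (by linarith [log_natFloor_le hx]) k

lemma sum_dk_div_mul_rpow_neg_le (k : ℕ) {s x : ℝ} (hs0 : 0 < s) (hs1 : s ≤ 1) (hx : 1 ≤ x) :
    ∑ n ∈ Icc 1 ⌊x⌋₊, (dk (k + 1) n : ℝ) / n * (x / n) ^ (-s) ≤ (1 + log x) ^ k / s := by
  have hx0 : 0 < x := by linarith
  have hterm : ∀ n ∈ Icc 1 ⌊x⌋₊, (dk (k + 1) n : ℝ) / n * (x / n) ^ (-s)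
      = (dk (k + 1) n : ℝ) * (n : ℝ) ^ (s - 1) / x ^ s := by
    intro n hn
    have hn0 : (0 : ℝ) < n := by exact_mod_cast (mem_Icc.mp hn).1
    rw [rpow_neg (by positivity), div_rpow hx0.le hn0.le, rpow_sub_one hn0.ne']
    field_simp
  rw [sum_congr rfl hterm, ← sum_div, div_le_div_iff₀ (by positivity) hs0]
  calc (∑ n ∈ Icc 1 ⌊x⌋₊, (dk (k + 1) n : ℝ) * (n : ℝ) ^ (s - 1)) * s
      ≤ (⌊x⌋₊ : ℝ) ^ s * (1 + log ⌊x⌋₊) ^ k := by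
        have := sum_dk_mul_rpow_sub_one_le k ⌊x⌋₊ hs0 hs1
        rwa [le_div_iff₀ hs0] at this
    _ ≤ x ^ s * (1 + log x) ^ k :=
        mul_le_mul (rpow_le_rpow (by positivity) (Nat.floor_le hx0.le) hs0.le)
          (pow_le_pow_left₀ (by positivity) (by linarith [log_natFloor_le hx]) k)
          (by positivity) (by positivity)
    _ = (1 + log x) ^ k * x ^ s := mul_comm _ _

lemma one_add_log_le_log_three_mul {x : ℝ} (hx : 0 < x) : 1 + log x ≤ log (3 * x) := by
  rw [log_mul (by norm_num) hx.ne']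
  have : 1 ≤ log 3 := by
    rw [le_log_iff_exp_le (by norm_num)]
    exact exp_one_lt_d9.le.trans (by norm_num)
  linarith

theorem stmt1 (k : ℕ) (hk : 1 ≤ k) :
    ∃ C : ℝ, 0 < C ∧ ∀ (σ x : ℝ), -1 ≤ σ → σ ≤ 0 → 1 ≤ x →
      ∑ n ∈ Finset.Icc 1 ⌊x⌋₊, ((dk k n : ℝ) / n) * (x / n) ^ σ
        ≤ C * (Real.log (3 * x)) ^ (k - 1) *
            (if σ = 0 then Real.log (3 * x) else min |σ|⁻¹ (Real.log (3 * x))) := by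
  obtain ⟨j, rfl⟩ : ∃ j, k = j + 1 := ⟨k - 1, by omega⟩
  refine ⟨1, one_pos, fun σ x hσ1 hσ0 hx => ?_⟩
  rw [Nat.add_sub_cancel, one_mul]
  have hL : 1 + log x ≤ log (3 * x) := one_add_log_le_log_three_mul (by linarith)
  have h0 : 0 ≤ 1 + log x := by linarith [log_nonneg hx]
  have htrivial : ∑ n ∈ Icc 1 ⌊x⌋₊, (dk (j + 1) n : ℝ) / n * (x / n) ^ σ
      ≤ log (3 * x) ^ j * log (3 * x) := by
    rw [← pow_succ]
    exact (sum_dk_div_mul_rpow_le (j + 1) hσ0 hx).trans (by gcongr)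
  split_ifs with hσ
  · exact htrivial
  have hneg : ∑ n ∈ Icc 1 ⌊x⌋₊, (dk (j + 1) n : ℝ) / n * (x / n) ^ σ
      ≤ log (3 * x) ^ j * |σ|⁻¹ := by
    have hσneg : σ < 0 := lt_of_le_of_ne hσ0 hσ
    have hbound := sum_dk_div_mul_rpow_neg_le j (neg_pos.mpr hσneg) (by linarith) hx
    rw [neg_neg] at hbound
    rw [abs_of_neg hσneg, ← div_eq_mul_inv]
    exact hbound.trans (div_le_div_of_nonneg_right (pow_le_pow_left₀ h0 hL j) (by linarith))
  rw [mul_min_of_nonneg _ _ (pow_nonneg (h0.trans hL) j)]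
  exact le_min hneg htrivial
end

section
/- For integers i ≥ 3 and complex numbers α, β and real X > 0, the contour integral (1/2πi) ∮ X^s (β+s)²/(α+s) · s^{-(i-1)} ds, taken over a circle of radius 1 centered at the origin (assuming |α| < 1 so both poles lie inside), equals d²/dx² [ ((x + log X)^{i-1}/(i-2)!) ∫₀¹ (1-u)^{i-2} e^{x(β - αu)} X^{-αu} du ] evaluated at x = 0. -/
/-!
Write `L = log X`, so that `X ^ s = exp (L s)`. On `|s| = 1 > |α|`, expand `exp (L s)` in its
Taylor series and `1 / (s + α)` in the geometric series `∑ (-α) ^ n s ^ (-n-1)` and integrate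
termwise: only the coefficient of `s⁻¹` survives, so
`(2πi)⁻¹ ∮ exp (L s) s ^ (-k) / (s + α) = E_k(L) := ∑ₙ (-α) ^ n L ^ (n + k) / (n + k)!`.
Since `(β + s) ^ 2 s ^ (-(i-1)) = β ^ 2 s ^ (-(i-1)) + 2 β s ^ (-(i-2)) + s ^ (-(i-3))`, the left
side is `β ^ 2 E_{i-1}(L) + 2 β E_{i-2}(L) + E_{i-3}(L)`.

On the right, the integral is the integral form of a Taylor remainder of the exponential:
integrating termwise with the Beta integral `∫₀¹ (1-u) ^ m u ^ n = m! n! / (m+n+1)!` shows that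
the bracket equals `exp (x β) E_{i-1}(x + L)`. As `E_{k+1}' = E_k`, its second derivative at `0`
is the same combination.
-/

open Complex intervalIntegral MeasureTheory Metric Set
open scoped Real Nat

theorem hasSum_intervalIntegral_of_norm_le {E : Type*} [NormedAddCommGroup E]
    [NormedSpace ℝ E] {ι : Type*} [Countable ι] {a b : ℝ} {F : ι → ℝ → E} {f : ℝ → E} {u : ι → ℝ}
    (hF : ∀ n, IntervalIntegrable (F n) volume a b) (hu : Summable u)
    (hFu : ∀ n, ∀ t ∈ uIcc a b, ‖F n t‖ ≤ u n) (hf : ∀ t ∈ uIcc a b, HasSum (F · t) (f t)) :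
    HasSum (fun n => ∫ t in a..b, F n t) (∫ t in a..b, f t) :=
  hasSum_integral_of_dominated_convergence (fun n _ => u n)
    (fun n => (hF n).def'.aestronglyMeasurable)
    (fun n => ae_of_all _ fun t ht => hFu n t (uIoc_subset_uIcc ht))
    (ae_of_all _ fun _ _ => hu) intervalIntegrable_const
    (ae_of_all _ fun t ht => hf t (uIoc_subset_uIcc ht))

theorem hasSum_circleIntegral_of_norm_le {E : Type*} [NormedAddCommGroup E] [NormedSpace ℂ E]
    {ι : Type*} [Countable ι] {c : ℂ} {R : ℝ} {F : ι → ℂ → E} {f : ℂ → E} {u : ι → ℝ}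
    (hR : 0 ≤ R) (hF : ∀ n, CircleIntegrable (F n) c R) (hu : Summable u)
    (hFu : ∀ n, ∀ z ∈ sphere c R, ‖F n z‖ ≤ u n)
    (hf : ∀ z ∈ sphere c R, HasSum (F · z) (f z)) :
    HasSum (fun n => ∮ z in C(c, R), F n z) (∮ z in C(c, R), f z) := by
  refine hasSum_intervalIntegral_of_norm_le (fun n => (hF n).out) (hu.mul_left |R|)
    (fun n θ _ => ?_) (fun θ _ => (hf _ (circleMap_mem_sphere c hR θ)).const_smul _)
  rw [norm_smul, deriv_circleMap, norm_mul, norm_circleMap_zero, norm_I, mul_one]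
  exact mul_le_mul_of_nonneg_left (hFu n _ (circleMap_mem_sphere c hR θ)) (abs_nonneg R)

theorem integral_one_sub_pow_mul_pow (m n : ℕ) :
    ∫ u in (0 : ℝ)..1, ((1 - u : ℝ) : ℂ) ^ m * (u : ℂ) ^ n = m ! * n ! / (m + n + 1)! := by
  have hB := Gamma_mul_Gamma_eq_betaIntegral (s := n + 1) (t := m + 1)
    (by simp; positivity) (by simp; positivity)
  rw [show (n + 1 + (m + 1) : ℂ) = ((m + n + 1 : ℕ) : ℂ) + 1 by push_cast; ring,
    Gamma_nat_eq_factorial, Gamma_nat_eq_factorial, Gamma_nat_eq_factorial] at hB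
  rw [eq_div_iff (by exact_mod_cast (m + n + 1).factorial_ne_zero), mul_comm,
    mul_comm (m ! : ℂ), hB, betaIntegral]
  congr 1
  refine integral_congr fun u _ => ?_
  simp only [add_sub_cancel_right, cpow_natCast, ofReal_sub, ofReal_one]
  ring

theorem continuousOn_zpow_div_add {α : ℂ} {R : ℝ} (hα : ‖α‖ < R) (j : ℤ) :
    ContinuousOn (fun z : ℂ => z ^ j / (z + α)) (sphere 0 R) := by
  have hR : 0 < R := (norm_nonneg α).trans_lt hα
  refine ContinuousOn.div (fun z hz => ?_) (by fun_prop) fun z hz => ?_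
  · exact (continuousAt_zpow₀ z j (.inl (ne_of_mem_sphere hz hR.ne'))).continuousWithinAt
  · rw [← sub_neg_eq_add, sub_ne_zero]
    rintro rfl
    simp [norm_neg, hα.ne] at hz

theorem circleIntegral_zpow_div_add {α : ℂ} {R : ℝ} (hα : ‖α‖ < R) (j : ℤ) :
    (∮ z in C(0, R), z ^ j / (z + α)) = if 0 ≤ j then 2 * π * I * (-α) ^ j.toNat else 0 := by
  have hR : 0 < R := (norm_nonneg α).trans_lt hα
  have hint : CircleIntegrable (fun z : ℂ => z ^ j) 0 R := by
    simpa using (circleIntegrable_sub_zpow_iff (c := 0) (w := 0) (R := R) (n := j)).2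
      (Or.inr (Or.inr (by simp [abs_of_pos hR, hR.ne])))
  -- the geometric expansion `(z + α)⁻¹ = ∑ (-α / z) ^ n z⁻¹`, integrated termwise
  have hgeom := hasSum_two_pi_I_cauchyPowerSeries_integral hint (w := -α) (by rwa [norm_neg])
  have hterm : ∀ n : ℕ, (∮ z in C(0, R), (-α / (z - 0)) ^ n • (z - 0)⁻¹ • z ^ j)
      = (-α) ^ n * if (n : ℤ) = j then 2 * π * I else 0 := by
    intro n
    have hz : EqOn (fun z => (-α / (z - 0)) ^ n • (z - 0)⁻¹ • z ^ j)
        (fun z => (-α) ^ n * (z - 0) ^ (j - n - 1)) (sphere 0 R) := fun z hz => by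
      have hz0 : z ≠ 0 := ne_of_mem_sphere hz hR.ne'
      simp only [sub_zero, smul_eq_mul, div_pow, zpow_sub₀ hz0, zpow_natCast, zpow_one]
      field_simp
    rw [circleIntegral.integral_congr hR.le hz, circleIntegral.integral_const_mul]
    split_ifs with hn
    · rw [show j - n - 1 = -1 by omega]
      congr 1
      simpa [zpow_neg_one] using circleIntegral.integral_sub_center_inv (0 : ℂ) hR.ne'
    · rw [circleIntegral.integral_sub_zpow_of_ne (by omega)]
  have hsum : HasSum (fun n : ℕ => (-α) ^ n * if (n : ℤ) = j then 2 * π * I else 0)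
      (if 0 ≤ j then 2 * π * I * (-α) ^ j.toNat else 0) := by
    split_ifs with hj
    · convert hasSum_single j.toNat fun n hn => ?_ using 1
      · simp [Int.toNat_of_nonneg hj, mul_comm]
      · simp [show (n : ℤ) ≠ j by omega]
    · convert hasSum_zero with n
      simp [show (n : ℤ) ≠ j by omega]
  simp only [hterm] at hgeom
  simp only [zero_add, sub_neg_eq_add, smul_eq_mul] at hgeom
  rw [hsum.unique hgeom]
  exact circleIntegral.integral_congr hR.le fun z _ => div_eq_inv_mul _ _

/-- For `α ≠ 0` this is `(-α) ^ (-k) (exp (-α y) - ∑_{j<k} (-α y) ^ j / j!)`; the series form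
also covers `α = 0`. -/
noncomputable def expTail (α : ℂ) (k : ℕ) (y : ℂ) : ℂ := ∑' n : ℕ, (-α) ^ n * y ^ (n + k) / (n + k)!

theorem norm_expTail_term_le (α : ℂ) (k : ℕ) {y : ℂ} {r : ℝ} (hy : ‖y‖ ≤ r) (n : ℕ) :
    ‖(-α) ^ n * y ^ (n + k) / (n + k)!‖ ≤ r ^ k * ((‖α‖ * r) ^ n / n !) := by
  have hr : 0 ≤ r := (norm_nonneg y).trans hy
  calc ‖(-α) ^ n * y ^ (n + k) / (n + k)!‖ = ‖α‖ ^ n * ‖y‖ ^ (n + k) / (n + k)! := by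
        simp
    _ ≤ ‖α‖ ^ n * r ^ (n + k) / n ! := by
        gcongr
        omega
    _ = r ^ k * ((‖α‖ * r) ^ n / n !) := by ring

theorem summable_expTail (α : ℂ) (k : ℕ) (y : ℂ) :
    Summable fun n : ℕ => (-α) ^ n * y ^ (n + k) / (n + k)! :=
  .of_norm_bounded ((Real.summable_pow_div_factorial _).mul_left _)
    (norm_expTail_term_le α k le_rfl)

theorem hasDerivAt_expTail (α : ℂ) (k : ℕ) (y : ℂ) :
    HasDerivAt (expTail α (k + 1)) (expTail α k y) y := by
  refine hasDerivAt_tsum_of_isPreconnected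
    ((Real.summable_pow_div_factorial (‖α‖ * (‖y‖ + 1))).mul_left ((‖y‖ + 1) ^ k))
    isOpen_ball (convex_ball (0 : ℂ) _).isPreconnected (fun n z _ => ?_)
    (fun n z hz => norm_expTail_term_le α k (mem_ball_zero_iff.mp hz).le n)
    (mem_ball_self (by positivity)) (summable_expTail α (k + 1) 0)
    (mem_ball_zero_iff.mpr (lt_add_one _))
  refine (((hasDerivAt_pow (n + k + 1) z).const_mul ((-α) ^ n)).div_const
    ((n + k + 1)! : ℂ)).congr_deriv ?_
  have hn : ((n + k + 1 : ℕ) : ℂ) ≠ 0 := Nat.cast_ne_zero.2 (n + k).succ_ne_zero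
  rw [Nat.factorial_succ, Nat.add_sub_cancel, Nat.cast_mul]
  field_simp

theorem circleIntegral_exp_mul_zpow_div_add {α : ℂ} {R : ℝ} (hα : ‖α‖ < R) (L : ℂ) (k : ℕ) :
    (∮ z in C(0, R), exp (L * z) * (z ^ (-(k : ℤ)) / (z + α))) = 2 * π * I * expTail α k L := by
  have hR : 0 < R := (norm_nonneg α).trans_lt hα
  set F : ℕ → ℂ → ℂ := fun p z => L ^ p / p ! * (z ^ ((p : ℤ) - k) / (z + α))
  have hF : ∀ z ∈ sphere (0 : ℂ) R,
      HasSum (F · z) (exp (L * z) * (z ^ (-(k : ℤ)) / (z + α))) := by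
    intro z hz
    have hz0 : z ≠ 0 := ne_of_mem_sphere hz hR.ne'
    rw [exp_eq_exp_ℂ]
    refine ((NormedSpace.expSeries_div_hasSum_exp (L * z)).mul_right _).congr_fun fun p => ?_
    simp only [F, zpow_sub₀ hz0, zpow_natCast, zpow_neg]
    ring
  have hFu : ∀ p, ∀ z ∈ sphere (0 : ℂ) R,
      ‖F p z‖ ≤ (‖L‖ * R) ^ p / p ! * ((R ^ k)⁻¹ / (R - ‖α‖)) := by
    intro p z hz
    rw [mem_sphere_zero_iff_norm] at hz
    have hzα : R - ‖α‖ ≤ ‖z + α‖ := by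
      simpa [hz] using norm_sub_norm_le z (-α)
    simp only [F, norm_mul, norm_div, norm_pow, norm_zpow, hz, Complex.norm_natCast]
    rw [zpow_sub₀ hR.ne', zpow_natCast, zpow_natCast]
    have hαR : 0 < R - ‖α‖ := sub_pos.2 hα
    calc ‖L‖ ^ p / p ! * (R ^ p / R ^ k / ‖z + α‖)
        ≤ ‖L‖ ^ p / p ! * (R ^ p / R ^ k / (R - ‖α‖)) := by gcongr
      _ = _ := by ring
  have hint : ∀ p, CircleIntegrable (F p) 0 R := fun p =>
    (continuousOn_const.mul (continuousOn_zpow_div_add hα _)).circleIntegrable hR.le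
  have hsum := hasSum_circleIntegral_of_norm_le hR.le hint
    ((Real.summable_pow_div_factorial _).mul_right _) hFu hF
  simp only [F, circleIntegral.integral_const_mul, circleIntegral_zpow_div_add hα] at hsum
  refine hsum.unique ?_
  rw [← (add_left_injective k).hasSum_iff fun p hp => ?_]
  · refine ((summable_expTail α k L).hasSum.mul_left (2 * π * I)).congr_fun fun n => ?_
    simp only [Function.comp_apply, Nat.cast_add, add_sub_cancel_right, Int.toNat_natCast,
      Nat.cast_nonneg, if_true]
    ring
  · have hpk : ¬ 0 ≤ (p : ℤ) - k := fun h => hp ⟨p - k, by simp only; omega⟩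
    rw [if_neg hpk, mul_zero]

theorem circleIntegral_exp_mul_add_sq_div {α : ℂ} {R : ℝ} (hα : ‖α‖ < R) (β L : ℂ) (m : ℕ) :
    (∮ s in C(0, R), exp (L * s) * (β + s) ^ 2 / (α + s) * s ^ (-((m : ℤ) + 2)))
      = 2 * π * I *
        (β ^ 2 * expTail α (m + 2) L + 2 * β * expTail α (m + 1) L + expTail α m L) := by
  have hR : 0 < R := (norm_nonneg α).trans_lt hα
  set A : ℕ → ℂ → ℂ := fun k z => exp (L * z) * (z ^ (-(k : ℤ)) / (z + α))
  have hA : ∀ k, ContinuousOn (A k) (sphere 0 R) := fun k =>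
    (continuous_exp.comp (continuous_const.mul continuous_id)).continuousOn.mul
      (continuousOn_zpow_div_add hα _)
  have hsplit : EqOn (fun s => exp (L * s) * (β + s) ^ 2 / (α + s) * s ^ (-((m : ℤ) + 2)))
      (fun s => β ^ 2 * A (m + 2) s + 2 * β * A (m + 1) s + A m s) (sphere 0 R) := by
    intro s hs
    have hs0 : s ≠ 0 := ne_of_mem_sphere hs hR.ne'
    simp only [A, zpow_neg, zpow_natCast]
    rw [show (m : ℤ) + 2 = ((m + 2 : ℕ) : ℤ) by push_cast; ring, zpow_natCast]
    field_simp
    ring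
  rw [circleIntegral.integral_congr hR.le hsplit, circleIntegral.integral_add,
    circleIntegral.integral_add, circleIntegral.integral_const_mul,
    circleIntegral.integral_const_mul]
  · simp only [A, circleIntegral_exp_mul_zpow_div_add hα]
    ring
  all_goals exact ContinuousOn.circleIntegrable hR.le (by fun_prop)

theorem expTail_succ_eq_integral (α : ℂ) (m : ℕ) (y : ℂ) :
    expTail α (m + 1) y
      = y ^ (m + 1) / m ! * ∫ u in (0 : ℝ)..1, ((1 - u : ℝ) : ℂ) ^ m * exp (-(α * y) * u) := by
  set w := -(α * y)
  set F : ℕ → ℝ → ℂ := fun n u => w ^ n / n ! * (((1 - u : ℝ) : ℂ) ^ m * (u : ℂ) ^ n)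
  have hF : ∀ u : ℝ, HasSum (F · u) (((1 - u : ℝ) : ℂ) ^ m * exp (w * u)) := fun u => by
    rw [exp_eq_exp_ℂ]
    refine ((NormedSpace.expSeries_div_hasSum_exp (w * u)).mul_left _).congr_fun fun n => ?_
    simp only [F]
    ring
  have hFu : ∀ n, ∀ u ∈ uIcc (0 : ℝ) 1, ‖F n u‖ ≤ ‖w‖ ^ n / n ! := by
    intro n u hu
    rw [uIcc_of_le zero_le_one] at hu
    have h1 : ‖((1 - u : ℝ) : ℂ) ^ m * (u : ℂ) ^ n‖ ≤ 1 := by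
      rw [norm_mul, norm_pow, norm_pow, norm_real, norm_real, Real.norm_of_nonneg hu.1,
        Real.norm_of_nonneg (sub_nonneg.2 hu.2)]
      exact mul_le_one₀ (pow_le_one₀ (by linarith [hu.2]) (by linarith [hu.1]))
        (pow_nonneg hu.1 n) (pow_le_one₀ hu.1 hu.2)
    calc ‖F n u‖ ≤ ‖w ^ n / (n ! : ℂ)‖ * 1 := by
          rw [norm_mul]; gcongr
      _ = ‖w‖ ^ n / n ! := by simp
  have hsum := hasSum_intervalIntegral_of_norm_le
    (fun n => (by fun_prop : Continuous (F n)).intervalIntegrable 0 1)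
    (Real.summable_pow_div_factorial ‖w‖) hFu (fun u _ => hF u)
  simp only [F, intervalIntegral.integral_const_mul, integral_one_sub_pow_mul_pow] at hsum
  refine (summable_expTail α (m + 1) y).hasSum.unique ?_
  refine (hsum.mul_left (y ^ (m + 1) / m !)).congr_fun fun n => ?_
  have hm : (m ! : ℂ) ≠ 0 := Nat.cast_ne_zero.2 m.factorial_ne_zero
  have hn : (n ! : ℂ) ≠ 0 := Nat.cast_ne_zero.2 n.factorial_ne_zero
  rw [show m + n + 1 = n + (m + 1) by ring]
  field_simp
  simp only [w]
  ring

theorem pow_div_factorial_mul_integral_eq (α β L : ℂ) (m : ℕ) (x : ℂ) :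
    (x + L) ^ (m + 1) / m ! *
        ∫ u in (0 : ℝ)..1, ((1 - u : ℝ) : ℂ) ^ m * exp (x * (β - α * u)) * exp (L * (-α * u))
      = exp (x * β) * expTail α (m + 1) (x + L) := by
  have hexp : ∀ u : ℝ, exp (x * (β - α * u)) * exp (L * (-α * u))
      = exp (x * β) * exp (-(α * (x + L)) * u) := fun u => by
    rw [← exp_add, ← exp_add]
    ring_nf
  simp only [mul_assoc, hexp, mul_left_comm _ (exp (x * β)), intervalIntegral.integral_const_mul,
    expTail_succ_eq_integral]

theorem deriv_deriv_exp_mul_comp_add {g g' g'' : ℂ → ℂ} (hg : ∀ z, HasDerivAt g (g' z) z)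
    (hg' : ∀ z, HasDerivAt g' (g'' z) z) (β c : ℂ) :
    deriv (deriv fun x : ℝ => exp (x * β) * g (x + c)) 0
      = β ^ 2 * g c + 2 * β * g' c + g'' c := by
  have hexp : ∀ z : ℂ, HasDerivAt (fun z => exp (z * β)) (exp (z * β) * β) z := fun z =>
    ((hasDerivAt_mul_const β).cexp).congr_deriv rfl
  have hshift : ∀ {f f' : ℂ → ℂ}, (∀ z, HasDerivAt f (f' z) z) →
      ∀ z, HasDerivAt (fun z => f (z + c)) (f' (z + c)) z := fun hf z =>
    HasDerivAt.comp_add_const z c (hf (z + c))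
  have h1 : ∀ z : ℂ, HasDerivAt (fun z => exp (z * β) * g (z + c))
      (exp (z * β) * (β * g (z + c) + g' (z + c))) z := fun z =>
    ((hexp z).mul (hshift hg z)).congr_deriv (by ring)
  have h2 : ∀ z : ℂ, HasDerivAt (fun z => exp (z * β) * (β * g (z + c) + g' (z + c)))
      (exp (z * β) * (β ^ 2 * g (z + c) + 2 * β * g' (z + c) + g'' (z + c))) z := fun z =>
    ((hexp z).mul (((hshift hg z).const_mul β).add (hshift hg' z))).congr_deriv
      (by simp only [Pi.add_apply]; ring)
  have hd : deriv (fun x : ℝ => exp (x * β) * g (x + c))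
      = fun x : ℝ => exp (x * β) * (β * g (x + c) + g' (x + c)) :=
    funext fun x => (h1 x).comp_ofReal.deriv
  rw [hd, (h2 _).comp_ofReal.deriv]
  simp

theorem stmt7 (i : ℕ) (hi : 3 ≤ i) (α β : ℂ) (hα : ‖α‖ < 1) (X : ℝ) (hX : 0 < X) :
    (1 / (2 * Real.pi * I)) *
        (∮ s in C(0, 1), (X : ℂ) ^ s * (β + s) ^ 2 / (α + s) * s ^ (-((i : ℤ) - 1)))
      = deriv (deriv (fun x : ℝ =>
          ((x + Real.log X : ℂ) ^ (i - 1) / (Nat.factorial (i - 2))) *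
            ∫ u in (0:ℝ)..1, ((1 - u : ℝ) : ℂ) ^ (i - 2) *
              Complex.exp (x * (β - α * u)) * (X : ℂ) ^ (-α * u))) 0 := by
  obtain ⟨m, rfl⟩ : ∃ m, i = m + 3 := ⟨i - 3, by omega⟩
  have hcpow : ∀ s : ℂ, (X : ℂ) ^ s = exp (Real.log X * s) := fun s => by
    rw [cpow_def_of_ne_zero (ofReal_ne_zero.2 hX.ne'), ofReal_log hX.le]
  simp only [hcpow, show m + 3 - 1 = m + 1 + 1 by omega, show m + 3 - 2 = m + 1 by omega,
    show -(((m + 3 : ℕ) : ℤ) - 1) = -((m : ℤ) + 2) by push_cast; ring,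
    pow_div_factorial_mul_integral_eq]
  rw [circleIntegral_exp_mul_add_sq_div (by simpa using hα),
    deriv_deriv_exp_mul_comp_add (hasDerivAt_expTail α (m + 1)) (hasDerivAt_expTail α m)]
  field_simp
end

section
/- For nonnegative integers i, k and l with l ≤ k, the residue at u = 0 of the function u ↦ x^u / ((u+s)^{j+1} u^{k+1}) (for x > 1 and s ≠ 0, |s| larger than the radius of the small circle around 0) is ∑_{l=0}^{k} (-1)^l binom(j+l, j) (log x)^{k-l} / (s^{j+l+1} (k-l)!). That is, (1/2πi) ∮_{|u|=ρ} x^u du/((u+s)^{j+1} u^{k+1}) = ∑_{l ≤ k} (-1)^l binom(j+l, j) (log x)^{k-l} / (s^{j+l+1} (k-l)!) for 0 < ρ < |s|. -/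
/-!
By Cauchy's formula for derivatives the integral is `2πi / k!` times the `k`-th derivative at `0`
of `u ↦ (u + s)^{-(j+1)} x^u`, which is holomorphic on the closed disc since `ρ < ‖s‖`. Expand
it by the Leibniz rule, using `D^l (u + s)^{-(j+1)} = (-1)^l l! C(j+l, j) (u + s)^{-(j+l+1)}` and
`D^m x^u = (log x)^m x^u`; the factor `C(k, l) l! / k!` becomes `1 / (k - l)!`.
-/

open Complex Metric Finset Nat

theorem iteratedDeriv_const_cpow {c : ℂ} (hc : c ≠ 0) (n : ℕ) :
    iteratedDeriv n (fun u : ℂ => c ^ u) = fun u => log c ^ n * c ^ u := by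
  simp only [cpow_def_of_ne_zero hc, iteratedDeriv_cexp_const_mul]

theorem prod_range_neg_add_one_sub {R : Type*} [CommRing R] (j l : ℕ) :
    ∏ i ∈ range l, (-((j : R) + 1) - i) = (-1) ^ l * (l ! * (j + l).choose j) := by
  have h : ∀ i ∈ range l, (-((j : R) + 1) - i) = -1 * ((j + 1 + i : ℕ) : R) := by
    intro i _; push_cast; ring
  rw [prod_congr rfl h, prod_mul_distrib, prod_const, card_range, ← Nat.cast_prod,
    ← ascFactorial_eq_prod_range, ascFactorial_eq_factorial_mul_choose, choose_symm_add]
  push_cast; ring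

theorem iteratedDeriv_inv_add_const_pow {𝕜 : Type*} [NontriviallyNormedField 𝕜]
    (s : 𝕜) (j l : ℕ) (u : 𝕜) :
    iteratedDeriv l (fun u => ((u + s) ^ (j + 1))⁻¹) u
      = (-1) ^ l * (l ! * (j + l).choose j) * ((u + s) ^ (j + l + 1))⁻¹ := by
  have h : (fun u : 𝕜 => ((u + s) ^ (j + 1))⁻¹) = fun u => (u + s) ^ (-((j : ℤ) + 1)) := by
    funext u; rw [zpow_neg]; norm_cast
  rw [h, iteratedDeriv_comp_add_const l (fun y : 𝕜 => y ^ (-((j : ℤ) + 1))),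
    iteratedDeriv_eq_iterate]
  dsimp only
  rw [iter_deriv_zpow]
  push_cast
  have hexp : -((j : ℤ) + 1) - l = -((j + l + 1 : ℕ) : ℤ) := by push_cast; ring
  rw [prod_range_neg_add_one_sub, hexp, zpow_neg, zpow_natCast]

theorem circleIntegral_cpow_div_add_pow_mul_pow {c s : ℂ} (hc : c ≠ 0) {ρ : ℝ} (hρ : 0 < ρ)
    (hρs : ρ < ‖s‖) (j k : ℕ) :
    (∮ u in C(0, ρ), c ^ u / ((u + s) ^ (j + 1) * u ^ (k + 1)))
      = 2 * Real.pi * I * ∑ l ∈ range (k + 1),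
          (-1) ^ l * ((j + l).choose j : ℂ) * log c ^ (k - l) /
            (s ^ (j + l + 1) * (k - l)!) := by
  set g : ℂ → ℂ := fun u => ((u + s) ^ (j + 1))⁻¹
  set h : ℂ → ℂ := fun u => c ^ u
  have hus : ∀ u ∈ closedBall (0 : ℂ) ρ, u + s ≠ 0 := fun u hu hsum => by
    rw [mem_closedBall_zero_iff, eq_neg_of_add_eq_zero_left hsum, norm_neg] at hu
    linarith
  have hg : DifferentiableOn ℂ g (closedBall 0 ρ) :=
    DifferentiableOn.inv (by fun_prop) fun u hu => pow_ne_zero _ (hus u hu)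
  have hs : s ≠ 0 := by simpa using hus 0 (mem_closedBall_self hρ.le)
  have hg0 : ContDiffAt ℂ k g 0 :=
    ((contDiffAt_id.add contDiffAt_const).pow _).inv (by simpa using hs)
  have hh : Differentiable ℂ h := differentiable_id.const_cpow (Or.inl hc)
  have hint : (fun u : ℂ => c ^ u / ((u + s) ^ (j + 1) * u ^ (k + 1)))
      = fun u => (1 / (u - 0) ^ (k + 1)) • (g * h) u := by
    funext u; simp only [g, h, Pi.mul_apply, smul_eq_mul, sub_zero]; field_simp
  rw [hint, (hg.mul hh.differentiableOn).circleIntegral_one_div_sub_center_pow_smul hρ,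
    iteratedDeriv_mul hg0 hh.contDiff.contDiffAt, smul_eq_mul, mul_sum, mul_sum]
  refine sum_congr rfl fun l hl => ?_
  have hlk : l ≤ k := Nat.lt_succ_iff.mp (mem_range.mp hl)
  simp only [g, h, iteratedDeriv_inv_add_const_pow, iteratedDeriv_const_cpow hc, zero_add,
    cpow_zero]
  have hfact : (k.choose l : ℂ) * l ! * (k - l)! = k ! := by
    exact_mod_cast choose_mul_factorial_mul_factorial hlk
  have hchoose : (k.choose l : ℂ) ≠ 0 := Nat.cast_ne_zero.mpr (choose_pos hlk).ne'
  have hlfact : (l ! : ℂ) ≠ 0 := Nat.cast_ne_zero.mpr l.factorial_ne_zero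
  rw [← hfact]
  field_simp

theorem stmt8_general (j k : ℕ) (x : ℝ) (hx : 1 < x) (s : ℂ)
    (ρ : ℝ) (hρ : 0 < ρ) (hρs : ρ < ‖s‖) :
    (1 / (2 * Real.pi * I)) *
        (∮ u in C(0, ρ), (x : ℂ) ^ u / ((u + s) ^ (j + 1) * u ^ (k + 1)))
      = ∑ l ∈ Finset.range (k + 1),
          (-1) ^ l * (Nat.choose (j + l) j : ℂ) * (Real.log x) ^ (k - l) /
            (s ^ (j + l + 1) * (Nat.factorial (k - l))) := by
  have hx0 : 0 < x := zero_lt_one.trans hx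
  rw [circleIntegral_cpow_div_add_pow_mul_pow (ofReal_ne_zero.mpr hx0.ne') hρ hρs,
    ← ofReal_log hx0.le, one_div, inv_mul_cancel_left₀ two_pi_I_ne_zero]

theorem stmt8 (j k : ℕ) (x : ℝ) (hx : 1 < x) (s : ℂ) (hs : s ≠ 0)
    (ρ : ℝ) (hρ : 0 < ρ) (hρs : ρ < ‖s‖) :
    (1 / (2 * Real.pi * I)) *
        (∮ u in C(0, ρ), (x : ℂ) ^ u / ((u + s) ^ (j + 1) * u ^ (k + 1)))
      = ∑ l ∈ Finset.range (k + 1),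
          (-1) ^ l * (Nat.choose (j + l) j : ℂ) * (Real.log x) ^ (k - l) /
            (s ^ (j + l + 1) * (Nat.factorial (k - l))) :=
  stmt8_general j k x hx s ρ hρ hρs
end

section
/- Let k ≥ 1, x > 1, |s| ≤ 1/log x, and let F, H : ℝ → ℝ be fixed smooth functions. Then ∑_{n ≤ x} (d_k(n)/n^{1+s}) F(log(x/n)/log x) H(log(x/n)/log x) = ((log x)^k/(k-1)!) x^{-s} ∫₀¹ (1-u)^{k-1} F(u) H(u) x^{us} du + O_k((log 3x)^{k-1}). -/
open Complex intervalIntegral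

lemma dk_succ_eq (j n : ℕ) :
    (dk (j+1) n : ℂ) = ∑ p ∈ n.divisorsAntidiagonal, (dk j p.2 : ℂ) := by
  rw [show (∑ p ∈ n.divisorsAntidiagonal, (dk j p.2 : ℂ)) =
      ∑ p ∈ n.divisorsAntidiagonal, (fun a b => (dk j b : ℂ)) p.1 p.2 from rfl,
    Nat.sum_divisorsAntidiagonal (fun a b => (dk j b : ℂ))]
  simp [dk]
  exact (Nat.sum_div_divisors n (fun d => (dk j d : ℂ))).symm

lemma dk_one_eq (n : ℕ) (hn : n ≠ 0) : dk 1 n = 1 := by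
  have : ∀ d ∈ n.divisors, dk 0 (n / d) = if d = n then 1 else 0 := by
    intro d hd
    rw [Nat.mem_divisors] at hd
    rcases hd with ⟨hdvd, _⟩
    have hd0 : d ≠ 0 := by rintro rfl; simp at hdvd; omega
    simp only [dk]
    congr 1
    simp only [eq_iff_iff]
    constructor
    · intro h
      have := Nat.div_mul_cancel hdvd
      rw [h, one_mul] at this; omega
    · rintro rfl; exact Nat.div_self (Nat.pos_of_ne_zero hn)
  rw [show dk 1 n = ∑ d ∈ n.divisors, dk 0 (n / d) from rfl, Finset.sum_congr rfl this]
  rw [Finset.sum_ite_eq' n.divisors n (fun _ => 1)]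
  simp [Nat.mem_divisors, hn]

lemma sum_inv_sq (m : ℕ) : ∑ i ∈ Finset.range m, (1:ℝ)/(1+i)^2 ≤ 2 := by
  have h : ∀ i : ℕ, (1:ℝ)/(1+i)^2 ≤ 2 * ((1:ℝ)/(1+i) - 1/(1+(i+1:ℕ))) := by
    intro i
    have h1 : (0:ℝ) < 1 + i := by positivity
    have h2 : (0:ℝ) < 1 + (i+1:ℕ) := by positivity
    rw [div_sub_div _ _ (ne_of_gt h1) (ne_of_gt h2), ← mul_div_assoc,
      div_le_div_iff₀ (by positivity) (by positivity)]
    push_cast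
    nlinarith [sq_nonneg (i:ℝ), h1]
  calc ∑ i ∈ Finset.range m, (1:ℝ)/(1+i)^2
      ≤ ∑ i ∈ Finset.range m, 2 * ((1:ℝ)/(1+i) - 1/(1+(i+1:ℕ))) :=
        Finset.sum_le_sum fun i _ => h i
    _ = 2 * ∑ i ∈ Finset.range m, ((fun i : ℕ => (1:ℝ)/(1+i)) i - (fun i : ℕ => (1:ℝ)/(1+i)) (i+1)) := by
        rw [Finset.mul_sum]
    _ = 2 * ((1:ℝ)/(1+(0:ℕ)) - 1/(1+(m:ℕ))) := by rw [Finset.sum_range_sub']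
    _ ≤ 2 := by
        have : (0:ℝ) ≤ 1/(1+(m:ℕ)) := by positivity
        have : (1:ℝ)/(1+(0:ℕ)) = 1 := by norm_num
        rw [this]
        nlinarith [show (0:ℝ) ≤ 1/(1+(m:ℕ)) by positivity]

lemma harmonic_le (N : ℕ) : ∑ n ∈ Finset.Icc 1 N, (1:ℝ)/n ≤ 1 + Real.log N := by
  induction N with
  | zero => simp
  | succ N ih =>
    rw [Finset.sum_Icc_succ_top (by omega : 1 ≤ N + 1)]
    rcases Nat.eq_zero_or_pos N with rfl | hN
    · simp
    have key : (1:ℝ)/(N+1:ℕ) ≤ Real.log (N+1:ℕ) - Real.log N := by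
      have hN1 : (0:ℝ) < N := by exact_mod_cast hN
      have h2 : (0:ℝ) < (N:ℝ)+1 := by linarith
      have := Real.log_le_sub_one_of_pos (show (0:ℝ) < (N:ℝ)/((N:ℝ)+1) by positivity)
      rw [Real.log_div (ne_of_gt hN1) (ne_of_gt h2)] at this
      have : Real.log N - Real.log ((N:ℝ)+1) ≤ (N:ℝ)/((N:ℝ)+1) - 1 := this
      have heq : (N:ℝ)/((N:ℝ)+1) - 1 = -(1/((N:ℝ)+1)) := by field_simp; ring
      push_cast
      linarith [this, heq ▸ this]
    linarith [ih, key]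

lemma reindex {M : Type*} [AddCommMonoid M] (N : ℕ) (g : ℕ → ℕ → M) :
    ∑ n ∈ Finset.Icc 1 N, ∑ p ∈ n.divisorsAntidiagonal, g p.1 p.2
      = ∑ m ∈ Finset.Icc 1 N, ∑ d ∈ Finset.Icc 1 (N / m), g d m := by
  rw [← Finset.sum_sigma (Finset.Icc 1 N) (fun n => n.divisorsAntidiagonal)
      (fun a => g a.2.1 a.2.2),
    ← Finset.sum_sigma (Finset.Icc 1 N) (fun m => Finset.Icc 1 (N / m))
      (fun b => g b.2 b.1)]
  refine Finset.sum_nbij' (fun a => ⟨a.2.2, a.2.1⟩) (fun b => ⟨b.2 * b.1, (b.2, b.1)⟩)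
    ?_ ?_ ?_ ?_ ?_
  · rintro ⟨n, d, m⟩ ha
    simp only [Finset.mem_sigma, Finset.mem_Icc, Nat.mem_divisorsAntidiagonal] at ha ⊢
    obtain ⟨⟨h1, h2⟩, hdm, hn0⟩ := ha
    have hm0 : m ≠ 0 := by rintro rfl; simp at hdm; omega
    have hd0 : d ≠ 0 := by rintro rfl; simp at hdm; omega
    refine ⟨⟨Nat.one_le_iff_ne_zero.2 hm0, ?_⟩, Nat.one_le_iff_ne_zero.2 hd0, ?_⟩
    · calc m ≤ d * m := Nat.le_mul_of_pos_left m (Nat.pos_of_ne_zero hd0)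
        _ = n := hdm
        _ ≤ N := h2
    · rw [Nat.le_div_iff_mul_le (Nat.pos_of_ne_zero hm0)]
      omega
  · rintro ⟨m, d⟩ hb
    simp only [Finset.mem_sigma, Finset.mem_Icc, Nat.mem_divisorsAntidiagonal] at hb ⊢
    obtain ⟨⟨h1, h2⟩, h3, h4⟩ := hb
    rw [Nat.le_div_iff_mul_le (by omega)] at h4
    refine ⟨⟨Nat.one_le_iff_ne_zero.2 (by positivity), by omega⟩, ?_⟩
    simp only [eq_self_iff_true, true_and, ne_eq]
    positivity
  · rintro ⟨n, d, m⟩ ha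
    simp only [Finset.mem_sigma, Finset.mem_Icc, Nat.mem_divisorsAntidiagonal] at ha
    obtain ⟨-, hdm, -⟩ := ha
    simp [hdm]
  · rintro ⟨m, d⟩ hb; rfl
  · rintro ⟨n, d, m⟩ ha; rfl

lemma dk_div_le (j N : ℕ) : ∑ m ∈ Finset.Icc 1 N, (dk j m : ℝ)/m ≤ (1 + Real.log N)^j := by
  have hlogN : 0 ≤ Real.log N := Real.log_natCast_nonneg N
  induction j generalizing N with
  | zero =>
    have h1 : ∀ m ∈ Finset.Icc 1 N, (dk 0 m : ℝ)/m = if m = 1 then 1 else 0 := by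
      intro m hm
      simp only [dk]
      split <;> simp_all
    rw [Finset.sum_congr rfl h1, Finset.sum_ite_eq' (Finset.Icc 1 N) 1 (fun _ => (1:ℝ))]
    split <;> norm_num
  | succ j ih =>
    have key : ∀ n ∈ Finset.Icc 1 N, (dk (j+1) n : ℝ)/n
        = ∑ p ∈ n.divisorsAntidiagonal, (dk j p.2 : ℝ)/(p.1 * p.2) := by
      intro n hn
      have : (dk (j+1) n : ℝ) = ∑ p ∈ n.divisorsAntidiagonal, (dk j p.2 : ℝ) := by
        rw [show (∑ p ∈ n.divisorsAntidiagonal, (dk j p.2 : ℝ)) =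
            ∑ p ∈ n.divisorsAntidiagonal, (fun a b => (dk j b : ℝ)) p.1 p.2 from rfl,
          Nat.sum_divisorsAntidiagonal (fun a b => (dk j b : ℝ))]
        simp [dk]
        exact (Nat.sum_div_divisors n (fun d => (dk j d : ℝ))).symm
      rw [this, Finset.sum_div]
      refine Finset.sum_congr rfl fun p hp => ?_
      rw [Nat.mem_divisorsAntidiagonal] at hp
      rw [← hp.1]
      push_cast
      ring_nf
    rw [Finset.sum_congr rfl key, reindex N (fun d m => (dk j m : ℝ)/(d * m))]
    have step : ∀ m ∈ Finset.Icc 1 N, ∑ d ∈ Finset.Icc 1 (N / m), (dk j m : ℝ)/(d * m)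
        ≤ (dk j m : ℝ)/m * (1 + Real.log N) := by
      intro m hm
      rw [Finset.mem_Icc] at hm
      have hm0 : (0:ℝ) < m := by exact_mod_cast hm.1
      have h1 : ∑ d ∈ Finset.Icc 1 (N / m), (dk j m : ℝ)/(d * m)
          = (dk j m : ℝ)/m * ∑ d ∈ Finset.Icc 1 (N / m), (1:ℝ)/d := by
        rw [Finset.mul_sum]
        refine Finset.sum_congr rfl fun d hd => ?_
        rw [Finset.mem_Icc] at hd
        have hd0 : (0:ℝ) < d := by exact_mod_cast hd.1
        push_cast
        rw [div_mul_div_comm, mul_one, mul_comm (m:ℝ) (d:ℝ)]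
      rw [h1]
      refine mul_le_mul_of_nonneg_left ?_ (by positivity)
      refine (harmonic_le _).trans ?_
      have h2 : Real.log (N / m : ℕ) ≤ Real.log N := by
        rcases Nat.eq_zero_or_pos (N / m) with h | h
        · rw [h]; simpa using hlogN
        · exact Real.log_le_log (by exact_mod_cast h)
            (by exact_mod_cast Nat.div_le_self N m)
      linarith
    calc ∑ m ∈ Finset.Icc 1 N, ∑ d ∈ Finset.Icc 1 (N / m), (dk j m : ℝ)/(d * m)
        ≤ ∑ m ∈ Finset.Icc 1 N, (dk j m : ℝ)/m * (1 + Real.log N) :=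
          Finset.sum_le_sum step
      _ = (∑ m ∈ Finset.Icc 1 N, (dk j m : ℝ)/m) * (1 + Real.log N) := by
          rw [← Finset.sum_mul]
      _ ≤ (1 + Real.log N)^j * (1 + Real.log N) := by
          refine mul_le_mul_of_nonneg_right (ih N hlogN) (by linarith)
      _ = (1 + Real.log N)^(j+1) := by ring

lemma emlem (z : ℝ) (hz : 1 ≤ z) (Φ Φ' : ℝ → ℂ) (A B : ℝ)
    (hd : ∀ t ∈ Set.Icc 1 z, HasDerivAt Φ (Φ' t) t)
    (hA : ∀ t ∈ Set.Icc 1 z, ‖Φ t‖ ≤ A / t)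
    (hB : ∀ t ∈ Set.Icc 1 z, ‖Φ' t‖ ≤ B / t^2) :
    ‖(∑ n ∈ Finset.Icc 1 ⌊z⌋₊, Φ n) - ∫ t in (1:ℝ)..z, Φ t‖ ≤ 2*A + 2*B := by
  set N := ⌊z⌋₊ with hNdef
  have hN1 : 1 ≤ N := Nat.le_floor (by exact_mod_cast hz)
  have hNz : (N:ℝ) ≤ z := Nat.floor_le (by linarith)
  have hzN : z ≤ (N:ℝ) + 1 := (Nat.lt_floor_add_one z).le
  have hN1R : (1:ℝ) ≤ (N:ℝ) := by exact_mod_cast hN1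
  have hA0 : 0 ≤ A := by
    have := hA 1 ⟨le_refl 1, hz⟩
    have h0 := norm_nonneg (Φ 1)
    simp only [div_one] at this; linarith
  have hB0 : 0 ≤ B := by
    have := hB 1 ⟨le_refl 1, hz⟩
    have h0 := norm_nonneg (Φ' 1)
    simp only [one_pow, div_one] at this; linarith
  have hc : ContinuousOn Φ (Set.Icc 1 z) :=
    fun t ht => ((hd t ht).continuousAt).continuousWithinAt
  have II : ∀ a b : ℝ, 1 ≤ a → b ≤ z → a ≤ b → IntervalIntegrable Φ MeasureTheory.volume a b := by
    intro a b ha hb hab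
    refine (hc.mono ?_).intervalIntegrable
    rw [Set.uIcc_of_le hab]
    exact Set.Icc_subset_Icc ha hb
  -- sum rewrite
  have hsum : ∑ n ∈ Finset.Icc 1 N, Φ n
      = (∑ i ∈ Finset.range (N-1), Φ ((1:ℝ) + i)) + Φ N := by
    rw [show Finset.Icc 1 N = Finset.Ico 1 (N+1) by rfl, Finset.sum_Ico_eq_sum_range]
    have : N + 1 - 1 = (N-1) + 1 := by omega
    rw [this, Finset.sum_range_succ]
    congr 1
    · refine Finset.sum_congr rfl fun i _ => ?_
      congr 1; push_cast; ring
    · congr 1; push_cast [Nat.cast_sub hN1]; ring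
  -- integral decomposition
  have hint : ∀ i : ℕ, i < N - 1 → IntervalIntegrable Φ MeasureTheory.volume ((1:ℝ)+i) ((1:ℝ)+(i+1)) := by
    intro i hi
    refine II _ _ (by push_cast; linarith [Nat.cast_nonneg (α := ℝ) i]) ?_ (by push_cast; linarith)
    have : (i:ℝ) + 1 ≤ (N:ℝ) - 1 := by
      have : (i:ℝ) + 1 ≤ ((N:ℝ) - 1) := by
        have hi' : (i+1 : ℕ) ≤ N - 1 := hi
        have := (Nat.cast_le (α := ℝ)).2 hi'
        push_cast [Nat.cast_sub hN1] at this
        linarith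
      linarith
    push_cast; linarith
  have hI1 : ∑ i ∈ Finset.range (N-1), (∫ t in ((1:ℝ)+i)..((1:ℝ)+(i+1:ℕ)), Φ t)
      = ∫ t in (1:ℝ)..(N:ℝ), Φ t := by
    have := intervalIntegral.sum_integral_adjacent_intervals (a := fun i : ℕ => (1:ℝ)+i)
      (n := N-1) (by intro i hi; simpa using hint i hi)
    simp only [Nat.cast_zero, add_zero] at this
    rw [show ((1:ℝ) + ((N-1:ℕ):ℝ)) = (N:ℝ) by push_cast [Nat.cast_sub hN1]; ring] at this
    exact this
  have hI2 : (∫ t in (1:ℝ)..z, Φ t)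
      = (∫ t in (1:ℝ)..(N:ℝ), Φ t) + ∫ t in (N:ℝ)..z, Φ t :=
    (intervalIntegral.integral_add_adjacent_intervals
      (II 1 N le_rfl (by linarith) hN1R) (II N z hN1R le_rfl hNz)).symm
  -- difference
  have hdiff : (∑ n ∈ Finset.Icc 1 N, Φ n) - ∫ t in (1:ℝ)..z, Φ t
      = (∑ i ∈ Finset.range (N-1), (Φ ((1:ℝ)+i) - ∫ t in ((1:ℝ)+i)..((1:ℝ)+(i+1:ℕ)), Φ t))
        + (Φ N - ∫ t in (N:ℝ)..z, Φ t) := by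
    rw [hsum, hI2, ← hI1, Finset.sum_sub_distrib]; ring
  rw [hdiff]
  have hterm : ∀ i ∈ Finset.range (N-1),
      ‖Φ ((1:ℝ)+i) - ∫ t in ((1:ℝ)+i)..((1:ℝ)+(i+1:ℕ)), Φ t‖ ≤ B * (1/(1+i)^2) := by
    intro i hi
    rw [Finset.mem_range] at hi
    have hlo : (1:ℝ) ≤ (1:ℝ)+i := by linarith [Nat.cast_nonneg (α := ℝ) i]
    have hhi : (1:ℝ)+(i+1:ℕ) ≤ (N:ℝ) := by
      have : (i+1:ℕ) ≤ N - 1 := hi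
      have := (Nat.cast_le (α := ℝ)).2 this
      push_cast [Nat.cast_sub hN1] at this ⊢
      linarith
    have hsub : Set.Icc ((1:ℝ)+i) ((1:ℝ)+(i+1:ℕ)) ⊆ Set.Icc 1 z := by
      refine Set.Icc_subset_Icc hlo (by linarith)
    have hC : ∀ t ∈ Set.Icc ((1:ℝ)+i) ((1:ℝ)+(i+1:ℕ)), ‖Φ' t‖ ≤ B/(1+i)^2 := by
      intro t ht
      refine (hB t (hsub ht)).trans ?_
      have ht1 : (1:ℝ)+i ≤ t := ht.1
      have hpos : (0:ℝ) < 1+i := by linarith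
      exact div_le_div_of_nonneg_left hB0 (by positivity) (by nlinarith)
    have hlen : (1:ℝ)+i ≤ (1:ℝ)+(i+1:ℕ) := by push_cast; linarith
    have hconst : Φ ((1:ℝ)+i) = ∫ t in ((1:ℝ)+i)..((1:ℝ)+(i+1:ℕ)), Φ ((1:ℝ)+i) := by
      rw [intervalIntegral.integral_const]
      rw [show ((1:ℝ)+(i+1:ℕ)) - ((1:ℝ)+i) = 1 by push_cast; ring, one_smul]
    rw [hconst, ← intervalIntegral.integral_sub (intervalIntegrable_const)
      (II _ _ hlo (by linarith) hlen)]
    have := intervalIntegral.norm_integral_le_of_norm_le_const (C := B/(1+i)^2)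
      (f := fun t => Φ ((1:ℝ)+i) - Φ t) (a := (1:ℝ)+i) (b := (1:ℝ)+(i+1:ℕ)) ?_
    · refine this.trans ?_
      rw [show |((1:ℝ)+(i+1:ℕ)) - ((1:ℝ)+i)| = 1 by push_cast; rw [show (1:ℝ)+((i:ℝ)+1) - (1+i) = 1 by ring]; norm_num]
      rw [mul_one, mul_one_div B _]
    · intro t ht
      rw [Set.uIoc_of_le hlen] at ht
      have htmem : t ∈ Set.Icc ((1:ℝ)+i) ((1:ℝ)+(i+1:ℕ)) := ⟨ht.1.le, ht.2⟩
      rw [norm_sub_rev]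
      have key := Convex.norm_image_sub_le_of_norm_hasDerivWithin_le
        (f := Φ) (f' := Φ') (s := Set.Icc ((1:ℝ)+i) ((1:ℝ)+(i+1:ℕ)))
        (fun u hu => ((hd u (hsub hu)).hasDerivWithinAt)) hC (convex_Icc _ _)
        (Set.left_mem_Icc.2 hlen) htmem
      refine key.trans ?_
      have : ‖t - ((1:ℝ)+i)‖ ≤ 1 := by
        rw [Real.norm_eq_abs, _root_.abs_of_nonneg (by linarith [ht.1.le])]
        have := ht.2; push_cast at this ⊢; linarith
      calc B/(1+i)^2 * ‖t - ((1:ℝ)+i)‖ ≤ B/(1+i)^2 * 1 :=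
            mul_le_mul_of_nonneg_left this (by positivity)
        _ = B/(1+i)^2 := mul_one _
  have hsumB : ∑ i ∈ Finset.range (N-1), B * (1/(1+i)^2) ≤ 2*B := by
    rw [← Finset.mul_sum]
    calc B * ∑ i ∈ Finset.range (N-1), (1:ℝ)/(1+i)^2 ≤ B * 2 :=
          mul_le_mul_of_nonneg_left (sum_inv_sq _) hB0
      _ = 2*B := by ring
  have hPhiN : ‖Φ (N:ℝ)‖ ≤ A := by
    refine (hA N ⟨hN1R, hNz⟩).trans ?_
    rw [div_le_iff₀ (by linarith)]
    nlinarith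
  have hIN : ‖∫ t in (N:ℝ)..z, Φ t‖ ≤ A := by
    have := intervalIntegral.norm_integral_le_of_norm_le_const (C := A/N)
      (f := Φ) (a := (N:ℝ)) (b := z) ?_
    · refine this.trans ?_
      have h1 : |z - (N:ℝ)| ≤ 1 := by rw [_root_.abs_of_nonneg (by linarith)]; linarith
      have h2 : A/(N:ℝ) ≤ A := by
        rw [div_le_iff₀ (by linarith)]; nlinarith
      calc A/(N:ℝ) * |z - N| ≤ A/(N:ℝ) * 1 := mul_le_mul_of_nonneg_left h1 (by positivity)
        _ ≤ A := by rw [mul_one]; exact h2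
    · intro t ht
      rw [Set.uIoc_of_le hNz] at ht
      refine (hA t ⟨by linarith [ht.1.le], ht.2⟩).trans ?_
      exact div_le_div_of_nonneg_left hA0 (by linarith) (by linarith [ht.1.le])
  calc ‖_ + (Φ (N:ℝ) - ∫ t in (N:ℝ)..z, Φ t)‖
      ≤ ‖∑ i ∈ Finset.range (N-1), (Φ ((1:ℝ)+i) - ∫ t in ((1:ℝ)+i)..((1:ℝ)+(i+1:ℕ)), Φ t)‖
        + ‖Φ (N:ℝ) - ∫ t in (N:ℝ)..z, Φ t‖ := norm_add_le _ _
    _ ≤ (∑ i ∈ Finset.range (N-1), B * (1/(1+i)^2)) + (‖Φ (N:ℝ)‖ + ‖∫ t in (N:ℝ)..z, Φ t‖) := by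
        gcongr
        · exact (norm_sum_le _ _).trans (Finset.sum_le_sum hterm)
        · exact norm_sub_le _ _
    _ ≤ 2*B + (A + A) := by
        gcongr <;> assumption
    _ = 2*A + 2*B := by ring

lemma norm_cexp' (w : ℂ) : ‖cexp w‖ = Real.exp w.re := by
  rw [Complex.norm_exp]

lemma L1 (M : ℝ) (G G' : ℝ → ℂ)
    (hG : ∀ r : ℝ, HasDerivAt G (G' r) r)
    (hGb : ∀ r ∈ Set.Icc (0:ℝ) 1, ‖G r‖ ≤ M)
    (hGb' : ∀ r ∈ Set.Icc (0:ℝ) 1, ‖G' r‖ ≤ M)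
    (x z b : ℝ) (s : ℂ) (hx : 1 < x) (hs : ‖s‖ ≤ 1/Real.log x)
    (hz1 : 1 ≤ z) (hzx : z ≤ x) (hbz : Real.log z ≤ b) (hbx : b ≤ Real.log x) :
    ‖(∑ n ∈ Finset.Icc 1 ⌊z⌋₊,
        cexp (-(1+s) * (Real.log (n:ℝ) : ℂ)) * G ((b - Real.log (n:ℝ))/Real.log x))
      - (Real.log x) • ∫ v in (0:ℝ)..(Real.log z/Real.log x),
          cexp (-((v * Real.log x : ℝ) : ℂ) * s) * G (b/Real.log x - v)‖ ≤ 60 * M := by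
  set L := Real.log x with hLdef
  have hL : 0 < L := Real.log_pos hx
  have hx0 : (0:ℝ) < x := by linarith
  have hsre : |s.re| ≤ 1/L := le_trans (Complex.abs_re_le_norm s) (by exact hs)
  have hM0 : 0 ≤ M := le_trans (norm_nonneg _) (hGb 0 ⟨le_rfl, zero_le_one⟩)
  have hlogz : 0 ≤ Real.log z := Real.log_nonneg hz1
  have hb0 : 0 ≤ b := le_trans hlogz hbz
  have hθ : Real.log z / L ≤ 1 := by
    rw [div_le_one hL]; exact Real.log_le_log (by linarith) hzx
  have hθ0 : 0 ≤ Real.log z / L := by positivity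
  -- exp norm bounds
  have hexp1 : ∀ t : ℝ, 1 ≤ t → t ≤ x → ‖cexp (-(1+s) * (Real.log t : ℂ))‖ ≤ Real.exp 1 / t := by
    intro t ht1 htx
    have ht0 : (0:ℝ) < t := by linarith
    have ha0 : 0 ≤ Real.log t := Real.log_nonneg ht1
    have haL : Real.log t ≤ L := Real.log_le_log ht0 htx
    have hre : (-(1+s) * (Real.log t : ℂ)).re = -((1 + s.re) * Real.log t) := by
      simp [Complex.mul_re]; ring
    rw [norm_cexp', hre]
    have : -((1 + s.re) * Real.log t) = (-Real.log t) + (-(s.re * Real.log t)) := by ring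
    rw [this, Real.exp_add, Real.exp_neg, Real.exp_log ht0]
    have h1 : Real.exp (-(s.re * Real.log t)) ≤ Real.exp 1 := by
      apply Real.exp_le_exp.2
      have : |s.re * Real.log t| ≤ 1 := by
        rw [abs_mul, _root_.abs_of_nonneg ha0]
        calc |s.re| * Real.log t ≤ (1/L) * L :=
              mul_le_mul hsre haL ha0 (by positivity)
          _ = 1 := by field_simp
      linarith [neg_abs_le (s.re * Real.log t), abs_nonneg (s.re * Real.log t)]
    calc t⁻¹ * Real.exp (-(s.re * Real.log t)) ≤ t⁻¹ * Real.exp 1 :=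
          mul_le_mul_of_nonneg_left h1 (by positivity)
      _ = Real.exp 1 / t := by rw [div_eq_mul_inv, mul_comm]
  have hexp2 : ∀ a : ℝ, |a| ≤ L → ‖cexp (-(a:ℂ) * s)‖ ≤ Real.exp 1 := by
    intro a ha
    have hre : (-(a:ℂ) * s).re = -(a * s.re) := by simp [Complex.mul_re]
    rw [norm_cexp', hre]
    apply Real.exp_le_exp.2
    have : |a * s.re| ≤ 1 := by
      rw [abs_mul]
      calc |a| * |s.re| ≤ L * (1/L) := mul_le_mul ha hsre (abs_nonneg _) hL.le
        _ = 1 := by field_simp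
    linarith [neg_abs_le (a * s.re)]
  -- G argument in [0,1]
  have harg : ∀ t : ℝ, 1 ≤ t → t ≤ z → (b - Real.log t)/L ∈ Set.Icc (0:ℝ) 1 := by
    intro t ht1 htz
    have ht0 : (0:ℝ) < t := by linarith
    have h1 : Real.log t ≤ b := le_trans (Real.log_le_log ht0 htz) hbz
    have h2 : 0 ≤ Real.log t := Real.log_nonneg ht1
    constructor
    · exact div_nonneg (by linarith) hL.le
    · rw [div_le_one hL]; linarith
  have hargv : ∀ v : ℝ, 0 ≤ v → v ≤ Real.log z / L → b/L - v ∈ Set.Icc (0:ℝ) 1 := by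
    intro v hv0 hv1
    constructor
    · have : v ≤ b/L := le_trans hv1 (by gcongr)
      linarith
    · have : b/L ≤ 1 := by rw [div_le_one hL]; exact hbx
      linarith
  have hexp13 : Real.exp 1 ≤ 3 := by
    have := Real.exp_one_lt_d9; linarith
  rcases le_or_gt 3 x with hx3 | hx3
  · -- main case
    have hL1 : (1:ℝ) ≤ L := by
      rw [hLdef]
      calc (1:ℝ) = Real.log (Real.exp 1) := (Real.log_exp 1).symm
        _ ≤ Real.log x := Real.log_le_log (Real.exp_pos 1) (le_trans hexp13 hx3)
    have hs1 : ‖s‖ ≤ 1 := hs.trans (by rw [div_le_one hL]; exact hL1)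
    set Φ : ℝ → ℂ := fun t => cexp (-(1+s) * (Real.log t : ℂ)) * G ((b - Real.log t)/L)
      with hΦdef
    set Φ' : ℝ → ℂ := fun t =>
        (cexp (-(1+s) * (Real.log t : ℂ)) * (-(1+s) * ((t⁻¹ : ℝ) : ℂ))) * G ((b - Real.log t)/L)
        + cexp (-(1+s) * (Real.log t : ℂ)) * (((0 - t⁻¹)/L : ℝ) • G' ((b - Real.log t)/L))
      with hΦ'def
    have hd : ∀ t ∈ Set.Icc 1 z, HasDerivAt Φ (Φ' t) t := by
      intro t ht
      have ht0 : (0:ℝ) < t := lt_of_lt_of_le zero_lt_one ht.1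
      have h1 : HasDerivAt Real.log t⁻¹ t := Real.hasDerivAt_log (ne_of_gt ht0)
      have h2 : HasDerivAt (fun u : ℝ => ((Real.log u : ℝ) : ℂ)) ((t⁻¹ : ℝ) : ℂ) t :=
        h1.ofReal_comp
      have h3 : HasDerivAt (fun u : ℝ => -(1+s) * ((Real.log u : ℝ) : ℂ))
          (-(1+s) * ((t⁻¹ : ℝ) : ℂ)) t := h2.const_mul _
      have h4 := h3.cexp
      have h5 : HasDerivAt (fun u : ℝ => (b - Real.log u)/L) ((0 - t⁻¹)/L) t :=
        ((hasDerivAt_const t b).sub h1).div_const L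
      have h6 : HasDerivAt (fun u : ℝ => G ((b - Real.log u)/L))
          (((0 - t⁻¹)/L : ℝ) • G' ((b - Real.log t)/L)) t :=
        (hG ((b - Real.log t)/L)).scomp t h5
      exact h4.mul h6
    have hA : ∀ t ∈ Set.Icc 1 z, ‖Φ t‖ ≤ (Real.exp 1 * M)/t := by
      intro t ht
      rw [hΦdef]; simp only [norm_mul]
      have e1 := hexp1 t ht.1 (le_trans ht.2 hzx)
      have e2 := hGb _ (harg t ht.1 ht.2)
      have ht0 : (0:ℝ) < t := lt_of_lt_of_le zero_lt_one ht.1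
      calc ‖cexp (-(1+s) * (Real.log t : ℂ))‖ * ‖G ((b - Real.log t)/L)‖
          ≤ (Real.exp 1 / t) * M := mul_le_mul e1 e2 (norm_nonneg _) (by positivity)
        _ = (Real.exp 1 * M)/t := by ring
    have hB : ∀ t ∈ Set.Icc 1 z, ‖Φ' t‖ ≤ (3 * Real.exp 1 * M)/t^2 := by
      intro t ht
      have ht0 : (0:ℝ) < t := lt_of_lt_of_le zero_lt_one ht.1
      have ht1 : (1:ℝ) ≤ t := ht.1
      have e1 := hexp1 t ht.1 (le_trans ht.2 hzx)
      have e2 := hGb _ (harg t ht.1 ht.2)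
      have e3 := hGb' _ (harg t ht.1 ht.2)
      rw [hΦ'def]; simp only
      refine (norm_add_le _ _).trans ?_
      have hn1 : ‖(cexp (-(1+s) * (Real.log t : ℂ)) * (-(1+s) * ((t⁻¹ : ℝ) : ℂ))) *
          G ((b - Real.log t)/L)‖ ≤ (2 * Real.exp 1 * M)/t^2 := by
        rw [norm_mul, norm_mul, norm_mul, norm_neg, Complex.norm_real, Real.norm_eq_abs,
          _root_.abs_of_nonneg (inv_nonneg.2 ht0.le)]
        have h1s : ‖(1:ℂ)+s‖ ≤ 2 := (norm_add_le _ _).trans (by rw [norm_one]; linarith)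
        calc ‖cexp (-(1+s) * (Real.log t : ℂ))‖ * (‖(1:ℂ)+s‖ * t⁻¹) * ‖G ((b - Real.log t)/L)‖
            ≤ (Real.exp 1 / t) * (2 * t⁻¹) * M := by
              refine mul_le_mul (mul_le_mul e1 ?_ (by positivity) (by positivity)) e2
                (norm_nonneg _) (by positivity)
              exact mul_le_mul_of_nonneg_right h1s (by positivity)
          _ = (2 * Real.exp 1 * M)/t^2 := by
              have ht' : (t:ℝ) ≠ 0 := ne_of_gt ht0
              field_simp
              try ring
              try exact Or.inl trivial
      have hn2 : ‖cexp (-(1+s) * (Real.log t : ℂ)) *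
          (((0 - t⁻¹)/L : ℝ) • G' ((b - Real.log t)/L))‖ ≤ (Real.exp 1 * M)/t^2 := by
        rw [norm_mul, norm_smul, Real.norm_eq_abs]
        have habs : |(0 - t⁻¹)/L| ≤ t⁻¹ := by
          rw [abs_div, _root_.abs_of_nonneg hL.le]
          rw [show (0:ℝ) - t⁻¹ = -t⁻¹ by ring, abs_neg, _root_.abs_of_nonneg (inv_nonneg.2 ht0.le)]
          rw [div_le_iff₀ hL]
          nlinarith [inv_nonneg.2 ht0.le]
        calc ‖cexp (-(1+s) * (Real.log t : ℂ))‖ * (|(0 - t⁻¹)/L| * ‖G' ((b - Real.log t)/L)‖)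
            ≤ (Real.exp 1 / t) * (t⁻¹ * M) := by
              refine mul_le_mul e1 (mul_le_mul habs e3 (norm_nonneg _) (inv_nonneg.2 ht0.le))
                (by positivity) (by positivity)
          _ = (Real.exp 1 * M)/t^2 := by
              have ht' : (t:ℝ) ≠ 0 := ne_of_gt ht0
              field_simp
              try ring
              try exact Or.inl trivial
      calc _ ≤ (2 * Real.exp 1 * M)/t^2 + (Real.exp 1 * M)/t^2 := add_le_add hn1 hn2
        _ = (3 * Real.exp 1 * M)/t^2 := by ring
    have hem := emlem z hz1 Φ Φ' (Real.exp 1 * M) (3 * Real.exp 1 * M) hd hA hB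
    -- substitution
    have hcontΦ : ContinuousOn Φ {t : ℝ | 0 < t} := by
      have hGc : Continuous G := by
        rw [continuous_iff_continuousAt]; exact fun r => (hG r).continuousAt
      have hlogc : ContinuousOn Real.log {t : ℝ | 0 < t} :=
        Real.continuousOn_log.mono (by intro t ht; exact ne_of_gt ht)
      apply ContinuousOn.mul
      · exact Complex.continuous_exp.comp_continuousOn
          ((continuousOn_const.mul (Complex.continuous_ofReal.comp_continuousOn hlogc)))
      · exact hGc.comp_continuousOn
          ((continuousOn_const.sub hlogc).div_const L)
    have hsubst : (∫ t in (1:ℝ)..z, Φ t)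
        = L • ∫ v in (0:ℝ)..(Real.log z/L), cexp (-((v * L : ℝ) : ℂ) * s) * G (b/L - v) := by
      have hf : ∀ v ∈ Set.uIcc (0:ℝ) (Real.log z/L),
          HasDerivAt (fun v => Real.exp (L*v)) (Real.exp (L*v) * L) v := by
        intro v _
        have h0 : HasDerivAt (fun v : ℝ => L*v) L v := by
          simpa using (hasDerivAt_id v).const_mul L
        exact h0.exp
      have himg : ContinuousOn Φ ((fun v => Real.exp (L*v)) '' Set.uIcc 0 (Real.log z/L)) := by
        refine hcontΦ.mono ?_
        rintro _ ⟨v, -, rfl⟩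
        exact Real.exp_pos _
      have key := intervalIntegral.integral_comp_smul_deriv' hf
        (by fun_prop) himg
      have hend0 : Real.exp (L*0) = 1 := by rw [mul_zero, Real.exp_zero]
      have hend1 : Real.exp (L*(Real.log z/L)) = z := by
        rw [show L*(Real.log z/L) = Real.log z by field_simp]
        exact Real.exp_log (by linarith)
      rw [hend0, hend1] at key
      simp only [Function.comp] at key
      rw [← key]
      have hpt : ∀ v ∈ Set.uIcc (0:ℝ) (Real.log z/L),
          (fun v => (Real.exp (L*v) * L) • Φ (Real.exp (L*v))) v
          = (fun v => L • (cexp (-((v * L : ℝ) : ℂ) * s) * G (b/L - v))) v := by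
        intro v _
        simp only
        rw [hΦdef]; simp only
        rw [Real.log_exp]
        rw [Complex.real_smul, Complex.real_smul, Complex.ofReal_mul, Complex.ofReal_exp]
        have hGarg : (b - L*v)/L = b/L - v := by field_simp
        rw [hGarg]
        have hre : cexp (↑(L*v)) * ↑L * (cexp (-(1+s) * ((Real.log (Real.exp (L*v)) : ℝ) : ℂ)) * G (b/L - v))
            = cexp (↑(L*v)) * ↑L * (cexp (-(1+s) * ((L*v : ℝ) : ℂ)) * G (b/L - v)) := by
          rw [Real.log_exp]
        have : cexp (↑(L*v)) * (L:ℂ) * (cexp (-(1+s) * ((L*v : ℝ) : ℂ)) * G (b/L - v))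
            = (L:ℂ) * ((cexp (↑(L*v)) * cexp (-(1+s) * ((L*v : ℝ) : ℂ))) * G (b/L - v)) := by
          ring
        rw [this, ← Complex.exp_add]
        congr 2
        push_cast
        ring
      rw [intervalIntegral.integral_congr hpt, intervalIntegral.integral_smul]
    rw [← hsubst]
    refine hem.trans ?_
    nlinarith [hM0, hexp13]
  · -- trivial case x < 3
    have hN2 : ⌊z⌋₊ ≤ 2 := by
      have hz3 : z < ((3:ℕ):ℝ) := by push_cast; linarith
      have := (Nat.floor_lt (by linarith : (0:ℝ) ≤ z)).2 hz3
      omega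
    have hsumb : ‖∑ n ∈ Finset.Icc 1 ⌊z⌋₊,
        cexp (-(1+s) * (Real.log (n:ℝ) : ℂ)) * G ((b - Real.log (n:ℝ))/L)‖
        ≤ 2 * (Real.exp 1 * M) := by
      refine le_trans (norm_sum_le _ _) ?_
      have hterm : ∀ n ∈ Finset.Icc 1 ⌊z⌋₊,
          ‖cexp (-(1+s) * (Real.log (n:ℝ) : ℂ)) * G ((b - Real.log (n:ℝ))/L)‖
          ≤ Real.exp 1 * M := by
        intro n hn
        rw [Finset.mem_Icc] at hn
        have hn1 : (1:ℝ) ≤ (n:ℝ) := by exact_mod_cast hn.1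
        have hnz : (n:ℝ) ≤ z := le_trans (by exact_mod_cast hn.2) (Nat.floor_le (by linarith))
        rw [norm_mul]
        calc ‖cexp (-(1+s) * (Real.log (n:ℝ) : ℂ))‖ * ‖G ((b - Real.log (n:ℝ))/L)‖
            ≤ (Real.exp 1 / (n:ℝ)) * M :=
              mul_le_mul (hexp1 _ hn1 (le_trans hnz hzx)) (hGb _ (harg _ hn1 hnz))
                (norm_nonneg _) (by positivity)
          _ ≤ Real.exp 1 * M := by
              refine mul_le_mul_of_nonneg_right ?_ hM0
              exact div_le_self (Real.exp_pos 1).le hn1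
      calc ∑ n ∈ Finset.Icc 1 ⌊z⌋₊, ‖cexp (-(1+s) * (Real.log (n:ℝ) : ℂ)) *
            G ((b - Real.log (n:ℝ))/L)‖
          ≤ (Finset.Icc 1 ⌊z⌋₊).card • (Real.exp 1 * M) :=
            Finset.sum_le_card_nsmul _ _ _ hterm
        _ ≤ 2 * (Real.exp 1 * M) := by
            rw [Nat.card_Icc, nsmul_eq_mul]
            have : (⌊z⌋₊ + 1 - 1 : ℕ) ≤ 2 := by omega
            refine mul_le_mul_of_nonneg_right (by exact_mod_cast this) (by positivity)
    have hintb : ‖L • ∫ v in (0:ℝ)..(Real.log z/L),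
        cexp (-((v * L : ℝ) : ℂ) * s) * G (b/L - v)‖ ≤ 2 * (Real.exp 1 * M) := by
      rw [norm_smul, Real.norm_eq_abs, _root_.abs_of_nonneg hL.le]
      have hbound := intervalIntegral.norm_integral_le_of_norm_le_const
        (C := Real.exp 1 * M)
        (f := fun v => cexp (-((v * L : ℝ) : ℂ) * s) * G (b/L - v))
        (a := (0:ℝ)) (b := Real.log z/L) ?_
      · refine le_trans (mul_le_mul_of_nonneg_left hbound hL.le) ?_
        rw [show |Real.log z/L - 0| = Real.log z/L by
          rw [sub_zero]; exact _root_.abs_of_nonneg hθ0]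
        have hlz2 : Real.log z ≤ 2 := by
          have := Real.log_le_sub_one_of_pos (by linarith : (0:ℝ) < z)
          have hz3 : z < 3 := lt_of_le_of_lt hzx hx3
          linarith
        calc L * (Real.exp 1 * M * (Real.log z/L)) = Real.log z * (Real.exp 1 * M) := by
              field_simp
          _ ≤ 2 * (Real.exp 1 * M) := by
              refine mul_le_mul_of_nonneg_right hlz2 (by positivity)
      · intro v hv
        rw [Set.uIoc_of_le hθ0] at hv
        rw [norm_mul]
        have hv0 : 0 ≤ v := hv.1.le
        have hvabs : |v * L| ≤ L := by
          rw [abs_mul, _root_.abs_of_nonneg hv0, _root_.abs_of_nonneg hL.le]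
          nlinarith [hv.2, hθ, hθ0, hL]
        have he2 : ‖cexp (-((v * L : ℝ) : ℂ) * s)‖ ≤ Real.exp 1 := hexp2 _ hvabs
        exact mul_le_mul he2 (hGb _ (hargv v hv0 hv.2)) (norm_nonneg _) (Real.exp_pos 1).le
    refine le_trans (norm_sub_le _ _) (le_trans (add_le_add hsumb hintb) ?_)
    nlinarith [hM0, hexp13]

lemma ibp (f : ℝ → ℂ) (hf : Continuous f) (θ : ℝ) (j : ℕ) (hj : 1 ≤ j) :
    ∫ v in (0:ℝ)..θ, ((v:ℂ))^(j-1) * (∫ t in v..θ, f t)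
      = (1/(j:ℂ)) * ∫ v in (0:ℝ)..θ, ((v:ℂ))^j * f v := by
  have hjC : (j:ℂ) ≠ 0 := Nat.cast_ne_zero.2 (by omega)
  set w : ℝ → ℂ := fun v => ∫ t in v..θ, f t with hwdef
  set u : ℝ → ℂ := fun v => ((v:ℂ))^j / (j:ℂ) with hudef
  have hw : ∀ v : ℝ, HasDerivAt w (-f v) v := by
    intro v
    have hD : HasDerivAt (fun y => ∫ t in θ..y, f t) (f v) v :=
      intervalIntegral.integral_hasDerivAt_right (hf.intervalIntegrable _ _)
        (hf.stronglyMeasurableAtFilter _ _) hf.continuousAt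
    have : w = fun y => -∫ t in θ..y, f t := by
      funext y; rw [hwdef]; exact intervalIntegral.integral_symm _ _
    rw [this]
    exact hD.neg
  have hu : ∀ v : ℝ, HasDerivAt u ((v:ℂ)^(j-1)) v := by
    intro v
    have h1 : HasDerivAt (fun y : ℝ => ((y:ℝ):ℂ)^j) ((j:ℂ) * (v:ℂ)^(j-1)) v :=
      (hasDerivAt_pow j ((v:ℝ):ℂ)).comp_ofReal
    have h2 := h1.div_const (j:ℂ)
    have : ((j:ℂ) * (v:ℂ)^(j-1))/(j:ℂ) = (v:ℂ)^(j-1) := by field_simp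
    rw [this] at h2
    exact h2
  have key := intervalIntegral.integral_mul_deriv_eq_deriv_mul
    (u := w) (u' := fun v => -f v) (v := u) (v' := fun v => (v:ℂ)^(j-1))
    (a := 0) (b := θ)
    (fun v _ => hw v) (fun v _ => hu v)
    ((hf.neg.intervalIntegrable _ _))
    (by apply Continuous.intervalIntegrable; continuity)
  have hwθ : w θ = 0 := intervalIntegral.integral_same
  have hu0 : u 0 = 0 := by
    rw [hudef]; simp [zero_pow (by omega : j ≠ 0)]
  rw [hwθ, hu0] at key
  simp only [zero_mul, mul_zero, zero_sub, sub_zero, zero_add] at key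
  have e1 : ∫ v in (0:ℝ)..θ, ((v:ℂ))^(j-1) * w v = ∫ v in (0:ℝ)..θ, w v * ((v:ℂ))^(j-1) := by
    refine intervalIntegral.integral_congr fun v _ => mul_comm _ _
  rw [e1, key]
  have e2 : ∀ v : ℝ, -(-f v * u v) = (1/(j:ℂ)) * (((v:ℂ))^j * f v) := by
    intro v; rw [hudef]; simp only; field_simp
  calc -∫ v in (0:ℝ)..θ, -f v * u v = ∫ v in (0:ℝ)..θ, -(-f v * u v) := by
        rw [intervalIntegral.integral_neg]
    _ = ∫ v in (0:ℝ)..θ, (1/(j:ℂ)) * (((v:ℂ))^j * f v) :=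
        intervalIntegral.integral_congr fun v _ => e2 v
    _ = (1/(j:ℂ)) * ∫ v in (0:ℝ)..θ, ((v:ℂ))^j * f v := intervalIntegral.integral_const_mul _ _

lemma exp_bound (L : ℝ) (s : ℂ) (hL : 0 < L) (hsre : |s.re| ≤ 1/L)
    (a : ℝ) (ha : |a| ≤ L) : ‖cexp (-((a:ℝ):ℂ) * s)‖ ≤ Real.exp 1 := by
  have hre : (-(a:ℂ) * s).re = -(a * s.re) := by simp [Complex.mul_re]
  rw [norm_cexp', hre]
  apply Real.exp_le_exp.2
  have : |a * s.re| ≤ 1 := by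
    rw [abs_mul]
    calc |a| * |s.re| ≤ L * (1/L) := mul_le_mul ha hsre (abs_nonneg _) hL.le
      _ = 1 := by field_simp
  linarith [neg_abs_le (a * s.re)]

lemma exp_bound' (L : ℝ) (s : ℂ) (hL : 0 < L) (hsre : |s.re| ≤ 1/L)
    (a : ℝ) (ha : |a| ≤ L) : ‖cexp (((a:ℝ):ℂ) * s)‖ ≤ Real.exp 1 := by
  have := exp_bound L s hL hsre (-a) (by rwa [abs_neg])
  rwa [Complex.ofReal_neg, neg_neg] at this

lemma exp_bound1 (x : ℝ) (s : ℂ) (hx : 1 < x) (hsre : |s.re| ≤ 1/Real.log x)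
    (t : ℝ) (ht1 : 1 ≤ t) (htx : t ≤ x) :
    ‖cexp (-(1+s) * (Real.log t : ℂ))‖ ≤ Real.exp 1 / t := by
  have hL : 0 < Real.log x := Real.log_pos hx
  have ht0 : (0:ℝ) < t := by linarith
  have ha0 : 0 ≤ Real.log t := Real.log_nonneg ht1
  have haL : Real.log t ≤ Real.log x := Real.log_le_log ht0 htx
  have hre : (-(1+s) * (Real.log t : ℂ)).re = -((1 + s.re) * Real.log t) := by
    simp [Complex.mul_re]; ring
  rw [norm_cexp', hre]
  have heq : -((1 + s.re) * Real.log t) = (-Real.log t) + (-(s.re * Real.log t)) := by ring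
  rw [heq, Real.exp_add, Real.exp_neg, Real.exp_log ht0]
  have h1 : Real.exp (-(s.re * Real.log t)) ≤ Real.exp 1 := by
    apply Real.exp_le_exp.2
    have : |s.re * Real.log t| ≤ 1 := by
      rw [abs_mul, _root_.abs_of_nonneg ha0]
      calc |s.re| * Real.log t ≤ (1/Real.log x) * Real.log x :=
            mul_le_mul hsre haL ha0 (by positivity)
        _ = 1 := by field_simp
    linarith [neg_abs_le (s.re * Real.log t)]
  calc t⁻¹ * Real.exp (-(s.re * Real.log t)) ≤ t⁻¹ * Real.exp 1 :=
        mul_le_mul_of_nonneg_left h1 (by positivity)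
    _ = Real.exp 1 / t := by rw [div_eq_mul_inv, mul_comm]

lemma log3x_ge_one (x : ℝ) (hx : 1 < x) : 1 ≤ Real.log (3*x) := by
  have h3 : Real.exp 1 ≤ 3 := by have := Real.exp_one_lt_d9; linarith
  calc (1:ℝ) = Real.log (Real.exp 1) := (Real.log_exp 1).symm
    _ ≤ Real.log (3*x) := Real.log_le_log (Real.exp_pos 1) (by nlinarith)

set_option maxHeartbeats 2000000 in
lemma Lk (k : ℕ) (hk : 1 ≤ k) : ∃ C : ℝ, 0 < C ∧ ∀ (M : ℝ) (G G' : ℝ → ℂ),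
    (∀ r : ℝ, HasDerivAt G (G' r) r) →
    (∀ r ∈ Set.Icc (0:ℝ) 1, ‖G r‖ ≤ M) → (∀ r ∈ Set.Icc (0:ℝ) 1, ‖G' r‖ ≤ M) →
    ∀ (x z : ℝ) (s : ℂ), 1 < x → ‖s‖ ≤ 1/Real.log x → 1 ≤ z → z ≤ x →
    ‖(∑ n ∈ Finset.Icc 1 ⌊z⌋₊, (dk k n : ℂ) *
        (cexp (-(1+s) * (Real.log (n:ℝ) : ℂ)) *
          G ((Real.log x - Real.log (n:ℝ))/Real.log x)))
      - ((Real.log x)^k / (Nat.factorial (k-1)) : ℝ) •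
        ∫ v in (0:ℝ)..(Real.log z/Real.log x),
          ((v:ℝ):ℂ)^(k-1) * (cexp (-((v * Real.log x : ℝ) : ℂ) * s) * G (1 - v))‖
      ≤ C * M * (Real.log (3*x))^(k-1) := by
  induction k with
  | zero => omega
  | succ j IH =>
    rcases Nat.eq_zero_or_pos j with rfl | hj
    · -- base case k = 1
      refine ⟨60, by norm_num, ?_⟩
      intro M G G' hG hGb hGb' x z s hx hs hz1 hzx
      have hL : 0 < Real.log x := Real.log_pos hx
      have h1 := L1 M G G' hG hGb hGb' x z (Real.log x) s hx hs hz1 hzx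
        (Real.log_le_log (by linarith) hzx) le_rfl
      have e_sum : ∑ n ∈ Finset.Icc 1 ⌊z⌋₊, (dk 1 n : ℂ) *
            (cexp (-(1+s) * (Real.log (n:ℝ) : ℂ)) *
              G ((Real.log x - Real.log (n:ℝ))/Real.log x))
          = ∑ n ∈ Finset.Icc 1 ⌊z⌋₊,
            cexp (-(1+s) * (Real.log (n:ℝ) : ℂ)) *
              G ((Real.log x - Real.log (n:ℝ))/Real.log x) := by
        refine Finset.sum_congr rfl fun n hn => ?_
        rw [Finset.mem_Icc] at hn
        rw [dk_one_eq n (by omega)]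
        simp
      have e_coef : (((Real.log x)^1 / (Nat.factorial 0) : ℝ)) = Real.log x := by
        simp
      have e_int : (∫ v in (0:ℝ)..(Real.log z/Real.log x),
            ((v:ℝ):ℂ)^(1-1) * (cexp (-((v * Real.log x : ℝ) : ℂ) * s) * G (1 - v)))
          = ∫ v in (0:ℝ)..(Real.log z/Real.log x),
            cexp (-((v * Real.log x : ℝ) : ℂ) * s) * G (Real.log x/Real.log x - v) := by
        refine intervalIntegral.integral_congr fun v _ => ?_
        rw [div_self (ne_of_gt hL)]
        norm_num
      rw [e_sum, e_coef, e_int, pow_zero, mul_one]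
      exact h1
    · -- inductive step
      obtain ⟨Cj, hCj, IHs⟩ := IH hj
      refine ⟨15 * Cj + 180, by positivity, ?_⟩
      intro M G G' hG hGb hGb' x z s hx hs hz1 hzx
      have hL : 0 < Real.log x := Real.log_pos hx
      set L := Real.log x with hLdef
      have hsre : |s.re| ≤ 1/L :=
        le_trans (Complex.abs_re_le_norm s) (by exact hs)
      have hM0 : 0 ≤ M := le_trans (norm_nonneg _) (hGb 0 ⟨le_rfl, zero_le_one⟩)
      have hGc : Continuous G := by
        rw [continuous_iff_continuousAt]; exact fun r => (hG r).continuousAt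
      have hx0 : (0:ℝ) < x := by linarith
      have he9 := Real.exp_one_lt_d9
      have he0 := Real.exp_pos 1
      set θ := Real.log z / L with hθdef
      have hθ0 : 0 ≤ θ := div_nonneg (Real.log_nonneg hz1) hL.le
      have hθ1 : θ ≤ 1 := by
        rw [hθdef, div_le_one hL]; exact Real.log_le_log (by linarith) hzx
      set f : ℝ → ℂ := fun t => cexp (-((t * L : ℝ) : ℂ) * s) * G (1 - t) with hfdef
      have hfc : Continuous f := by
        apply Continuous.mul
        · exact Complex.continuous_exp.comp
            (((Complex.continuous_ofReal.comp (continuous_id.mul continuous_const)).neg).mul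
              continuous_const)
        · exact hGc.comp (continuous_const.sub continuous_id)
      have hfb : ∀ t ∈ Set.Icc (0:ℝ) 1, ‖f t‖ ≤ Real.exp 1 * M := by
        intro t ht
        rw [hfdef]; simp only [norm_mul]
        have h1 : |t * L| ≤ L := by
          rw [abs_mul, _root_.abs_of_nonneg ht.1, _root_.abs_of_nonneg hL.le]
          nlinarith [ht.2]
        exact mul_le_mul (exp_bound L s hL hsre _ h1)
          (hGb _ ⟨by linarith [ht.2], by linarith [ht.1]⟩) (norm_nonneg _) he0.le
      have hWd : ∀ y : ℝ, HasDerivAt (fun y => ∫ t in y..θ, f t) (-f y) y := by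
        intro y
        have hD : HasDerivAt (fun u => ∫ t in θ..u, f t) (f y) y :=
          intervalIntegral.integral_hasDerivAt_right (hfc.intervalIntegrable _ _)
            (hfc.stronglyMeasurableAtFilter _ _) hfc.continuousAt
        have hfun : (fun y => ∫ t in y..θ, f t) = fun u => -∫ t in θ..u, f t := by
          funext u; exact intervalIntegral.integral_symm _ _
        rw [hfun]
        exact hD.neg
      set Gt : ℝ → ℂ := fun r => cexp ((((1-r) * L : ℝ) : ℂ) * s) * ∫ t in (1-r)..θ, f t
        with hGtdef
      set Gt' : ℝ → ℂ := fun r =>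
          cexp ((((1-r) * L : ℝ) : ℂ) * s) * ((((-1 : ℝ) * L : ℝ) : ℂ) * s) *
            (∫ t in (1-r)..θ, f t)
          + cexp ((((1-r) * L : ℝ) : ℂ) * s) * f (1-r) with hGt'def
      have hGtd : ∀ r : ℝ, HasDerivAt Gt (Gt' r) r := by
        intro r
        have h5 : HasDerivAt (fun r : ℝ => 1 - r) (-1) r := by
          simpa using (hasDerivAt_id r).const_sub 1
        have hW : HasDerivAt (fun r : ℝ => ∫ t in (1-r)..θ, f t) (f (1-r)) r := by
          have h7 := (hWd (1-r)).scomp r h5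
          simpa [Function.comp_def] using h7
        have h6 : HasDerivAt (fun r : ℝ => (1-r) * L) ((-1) * L) r :=
          ((hasDerivAt_id r).const_sub 1).mul_const L
        have hin : HasDerivAt (fun r : ℝ => (((1-r) * L : ℝ) : ℂ) * s)
            ((((-1:ℝ) * L : ℝ) : ℂ) * s) r := (h6.ofReal_comp).mul_const s
        exact (hin.cexp).mul hW
      have hexpGt : ∀ r ∈ Set.Icc (0:ℝ) 1, ‖cexp ((((1-r) * L : ℝ) : ℂ) * s)‖ ≤ Real.exp 1 := by
        intro r hr
        refine exp_bound' L s hL hsre _ ?_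
        rw [abs_mul, _root_.abs_of_nonneg (by linarith [hr.2] : (0:ℝ) ≤ 1 - r),
          _root_.abs_of_nonneg hL.le]
        nlinarith [hr.1]
      have hWb : ∀ r ∈ Set.Icc (0:ℝ) 1, ‖∫ t in (1-r)..θ, f t‖ ≤ Real.exp 1 * M := by
        intro r hr
        have h1r : (0:ℝ) ≤ 1 - r := by linarith [hr.2]
        have h1r' : 1 - r ≤ 1 := by linarith [hr.1]
        have hb := intervalIntegral.norm_integral_le_of_norm_le_const (C := Real.exp 1 * M)
          (f := f) (a := 1-r) (b := θ) ?_
        · refine hb.trans ?_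
          have habs : |θ - (1-r)| ≤ 1 := by
            rw [abs_le]; constructor <;> linarith [hθ0, hθ1]
          nlinarith [mul_nonneg he0.le hM0]
        · intro t ht
          have h2 := Set.Ioc_subset_Icc_self ht
          exact hfb t ⟨le_trans (le_min h1r hθ0) h2.1, le_trans h2.2 (max_le h1r' hθ1)⟩
      have hGtb : ∀ r ∈ Set.Icc (0:ℝ) 1, ‖Gt r‖ ≤ 15 * M := by
        intro r hr
        rw [hGtdef]; simp only [norm_mul]
        calc ‖cexp ((((1-r) * L : ℝ) : ℂ) * s)‖ * ‖∫ t in (1-r)..θ, f t‖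
            ≤ Real.exp 1 * (Real.exp 1 * M) :=
              mul_le_mul (hexpGt r hr) (hWb r hr) (norm_nonneg _) he0.le
          _ ≤ 15 * M := by
              have hee : Real.exp 1 * Real.exp 1 ≤ 7.5 := by nlinarith [he9, he0.le]
              nlinarith [hee, hM0]
      have hGtb' : ∀ r ∈ Set.Icc (0:ℝ) 1, ‖Gt' r‖ ≤ 15 * M := by
        intro r hr
        rw [hGt'def]; simp only
        refine (norm_add_le _ _).trans ?_
        have hsn : ‖(((-1:ℝ) * L : ℝ) : ℂ) * s‖ ≤ 1 := by
          rw [norm_mul, Complex.norm_real, Real.norm_eq_abs]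
          have : |(-1:ℝ) * L| = L := by
            rw [abs_mul, abs_neg, abs_one, one_mul, _root_.abs_of_nonneg hL.le]
          rw [this]
          calc L * ‖s‖ ≤ L * (1/L) :=
                mul_le_mul_of_nonneg_left hs hL.le
            _ = 1 := by field_simp
        have h1 : ‖cexp ((((1-r) * L : ℝ) : ℂ) * s) * ((((-1:ℝ) * L : ℝ) : ℂ) * s) *
            (∫ t in (1-r)..θ, f t)‖ ≤ Real.exp 1 * (Real.exp 1 * M) := by
          rw [norm_mul, norm_mul]
          calc ‖cexp ((((1-r) * L : ℝ) : ℂ) * s)‖ * ‖(((-1:ℝ) * L : ℝ) : ℂ) * s‖ *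
              ‖∫ t in (1-r)..θ, f t‖
              ≤ (Real.exp 1 * 1) * (Real.exp 1 * M) := by
                refine mul_le_mul (mul_le_mul (hexpGt r hr) hsn (norm_nonneg _) he0.le)
                  (hWb r hr) (norm_nonneg _) (by positivity)
            _ = Real.exp 1 * (Real.exp 1 * M) := by ring
        have h2 : ‖cexp ((((1-r) * L : ℝ) : ℂ) * s) * f (1-r)‖
            ≤ Real.exp 1 * (Real.exp 1 * M) := by
          rw [norm_mul]
          exact mul_le_mul (hexpGt r hr)
            (hfb (1-r) ⟨by linarith [hr.2], by linarith [hr.1]⟩) (norm_nonneg _) he0.le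
        calc _ ≤ Real.exp 1 * (Real.exp 1 * M) + Real.exp 1 * (Real.exp 1 * M) :=
              add_le_add h1 h2
          _ ≤ 15 * M := by
              have hee : Real.exp 1 * Real.exp 1 ≤ 7.5 := by nlinarith [he9, he0.le]
              nlinarith [hee, hM0]
      have hIH := IHs (15*M) Gt Gt' hGtd hGtb hGtb' x z s hx hs hz1 hzx
      set N := ⌊z⌋₊ with hNdef
      have hN1 : 1 ≤ N := Nat.le_floor (by exact_mod_cast hz1)
      have hS2 : (∑ n ∈ Finset.Icc 1 N, (dk (j+1) n : ℂ) *
            (cexp (-(1+s) * (Real.log (n:ℝ) : ℂ)) * G ((L - Real.log (n:ℝ))/L)))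
          = ∑ m ∈ Finset.Icc 1 N, (dk j m : ℂ) *
              (cexp (-(1+s) * (Real.log (m:ℝ) : ℂ)) *
                ∑ d ∈ Finset.Icc 1 (N/m), cexp (-(1+s) * (Real.log (d:ℝ) : ℂ)) *
                  G (((L - Real.log (m:ℝ)) - Real.log (d:ℝ))/L)) := by
        have step1 : ∀ n ∈ Finset.Icc 1 N, (dk (j+1) n : ℂ) *
              (cexp (-(1+s) * (Real.log (n:ℝ):ℂ)) * G ((L - Real.log (n:ℝ))/L))
            = ∑ p ∈ n.divisorsAntidiagonal,
                (fun d m => (dk j m : ℂ) * (cexp (-(1+s) * (Real.log ((d*m : ℕ):ℝ):ℂ)) *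
                  G ((L - Real.log ((d*m:ℕ):ℝ))/L))) p.1 p.2 := by
          intro n hn
          rw [dk_succ_eq, Finset.sum_mul]
          refine Finset.sum_congr rfl fun p hp => ?_
          rw [Nat.mem_divisorsAntidiagonal] at hp
          simp only
          rw [hp.1]
        rw [Finset.sum_congr rfl step1,
          reindex N (fun d m => (dk j m : ℂ) * (cexp (-(1+s) * (Real.log ((d*m : ℕ):ℝ):ℂ)) *
            G ((L - Real.log ((d*m:ℕ):ℝ))/L)))]
        refine Finset.sum_congr rfl fun m hm => ?_
        rw [Finset.mul_sum, Finset.mul_sum]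
        refine Finset.sum_congr rfl fun d hd => ?_
        rw [Finset.mem_Icc] at hm hd
        have hm1 : (1:ℝ) ≤ (m:ℝ) := by exact_mod_cast hm.1
        have hd1 : (1:ℝ) ≤ (d:ℝ) := by exact_mod_cast hd.1
        have hlog : Real.log ((d*m:ℕ):ℝ) = Real.log (d:ℝ) + Real.log (m:ℝ) := by
          push_cast
          exact Real.log_mul (by linarith) (by linarith)
        rw [hlog]
        rw [show -(1+s) * ((Real.log (d:ℝ) + Real.log (m:ℝ) : ℝ):ℂ)
            = -(1+s) * ((Real.log (m:ℝ) : ℝ):ℂ) + -(1+s) * ((Real.log (d:ℝ) : ℝ):ℂ) by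
          push_cast; ring]
        rw [Complex.exp_add]
        rw [show (L - (Real.log (d:ℝ) + Real.log (m:ℝ)))/L
            = ((L - Real.log (m:ℝ)) - Real.log (d:ℝ))/L by ring_nf]
        ring
      -- the inner-sum estimate
      have hT : ∀ m ∈ Finset.Icc 1 N,
          ‖(∑ d ∈ Finset.Icc 1 (N/m), cexp (-(1+s) * (Real.log (d:ℝ):ℂ)) *
              G (((L - Real.log (m:ℝ)) - Real.log (d:ℝ))/L))
            - L • Gt ((L - Real.log (m:ℝ))/L)‖ ≤ 60 * M := by
        intro m hm
        rw [Finset.mem_Icc] at hm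
        have hm1 : (1:ℝ) ≤ (m:ℝ) := by exact_mod_cast hm.1
        have hmz : (m:ℝ) ≤ z := le_trans (by exact_mod_cast hm.2) (Nat.floor_le (by linarith))
        have hm0 : (0:ℝ) < m := by linarith
        have hzm1 : 1 ≤ z/(m:ℝ) := (one_le_div hm0).2 hmz
        have hzmx : z/(m:ℝ) ≤ x := le_trans (div_le_self (by linarith) hm1) hzx
        have hlogzm : Real.log (z/(m:ℝ)) = Real.log z - Real.log (m:ℝ) :=
          Real.log_div (by linarith) (by linarith)
        have hlogm0 : 0 ≤ Real.log (m:ℝ) := Real.log_nonneg hm1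
        have hbz' : Real.log (z/(m:ℝ)) ≤ L - Real.log (m:ℝ) := by
          rw [hlogzm]
          have := Real.log_le_log (by linarith : (0:ℝ) < z) hzx
          linarith
        have hbx' : L - Real.log (m:ℝ) ≤ L := by linarith
        have h1 := L1 M G G' hG hGb hGb' x (z/(m:ℝ)) (L - Real.log (m:ℝ)) s hx hs
          hzm1 hzmx hbz' hbx'
        have hfloor : ⌊z/(m:ℝ)⌋₊ = N/m := by
          rw [hNdef, ← Nat.floor_div_natCast]
        rw [hfloor] at h1
        set w := Real.log (m:ℝ)/L with hwdef
        have hIm : (∫ v in (0:ℝ)..(Real.log (z/(m:ℝ))/L),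
              cexp (-((v * L : ℝ):ℂ) * s) * G ((L - Real.log (m:ℝ))/L - v))
            = Gt ((L - Real.log (m:ℝ))/L) := by
          have e1 : (L - Real.log (m:ℝ))/L = 1 - w := by
            rw [hwdef]; field_simp
          have e0 : Real.log (z/(m:ℝ))/L = θ - w := by
            rw [hlogzm, hθdef, hwdef]; ring
          rw [e0, e1]
          have e2 : (∫ v in (0:ℝ)..(θ - w), cexp (-((v * L : ℝ):ℂ) * s) * G ((1 - w) - v))
              = ∫ v in (0:ℝ)..(θ - w),
                  (fun t => cexp (-(((t - w) * L : ℝ):ℂ) * s) * G (1 - t)) (v + w) := by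
            refine intervalIntegral.integral_congr fun v _ => ?_
            simp only
            rw [show v + w - w = v by ring, show 1 - (v + w) = (1 - w) - v by ring]
          rw [e2, intervalIntegral.integral_comp_add_right
            (fun t => cexp (-(((t - w) * L : ℝ):ℂ) * s) * G (1 - t)) w]
          rw [zero_add, sub_add_cancel]
          rw [hGtdef]; simp only
          rw [show 1 - (1 - w) = w by ring]
          rw [← intervalIntegral.integral_const_mul]
          refine intervalIntegral.integral_congr fun t _ => ?_
          rw [hfdef]; simp only
          rw [← mul_assoc, ← Complex.exp_add]
          congr 2
          push_cast
          ring
        rw [hIm] at h1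
        exact h1
      -- split estimate
      have hlog3 : 1 ≤ Real.log (3*x) := log3x_ge_one x hx
      have hlog3' : (0:ℝ) ≤ Real.log (3*x) := by linarith
      have hLle : L ≤ Real.log (3*x) := Real.log_le_log hx0 (by nlinarith)
      have hNz : (N:ℝ) ≤ z := Nat.floor_le (by linarith)
      have hsplit : ‖(∑ n ∈ Finset.Icc 1 N, (dk (j+1) n : ℂ) *
            (cexp (-(1+s) * (Real.log (n:ℝ) : ℂ)) * G ((L - Real.log (n:ℝ))/L)))
          - (L:ℂ) * ∑ m ∈ Finset.Icc 1 N, (dk j m : ℂ) *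
              (cexp (-(1+s) * (Real.log (m:ℝ) : ℂ)) * Gt ((L - Real.log (m:ℝ))/L))‖
          ≤ 180 * M * (Real.log (3*x))^j := by
        rw [hS2, Finset.mul_sum, ← Finset.sum_sub_distrib]
        refine le_trans (norm_sum_le _ _) ?_
        have hterm : ∀ m ∈ Finset.Icc 1 N,
            ‖(dk j m : ℂ) * (cexp (-(1+s) * (Real.log (m:ℝ) : ℂ)) *
                ∑ d ∈ Finset.Icc 1 (N/m), cexp (-(1+s) * (Real.log (d:ℝ) : ℂ)) *
                  G (((L - Real.log (m:ℝ)) - Real.log (d:ℝ))/L))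
              - (L:ℂ) * ((dk j m : ℂ) * (cexp (-(1+s) * (Real.log (m:ℝ) : ℂ)) *
                  Gt ((L - Real.log (m:ℝ))/L)))‖
            ≤ (60 * M * Real.exp 1) * ((dk j m : ℝ)/(m:ℝ)) := by
          intro m hm
          have hTm := hT m hm
          rw [Finset.mem_Icc] at hm
          have hm1 : (1:ℝ) ≤ (m:ℝ) := by exact_mod_cast hm.1
          have hmz : (m:ℝ) ≤ z := le_trans (by exact_mod_cast hm.2) (Nat.floor_le (by linarith))
          have heq : (dk j m : ℂ) * (cexp (-(1+s) * (Real.log (m:ℝ) : ℂ)) *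
                ∑ d ∈ Finset.Icc 1 (N/m), cexp (-(1+s) * (Real.log (d:ℝ) : ℂ)) *
                  G (((L - Real.log (m:ℝ)) - Real.log (d:ℝ))/L))
              - (L:ℂ) * ((dk j m : ℂ) * (cexp (-(1+s) * (Real.log (m:ℝ) : ℂ)) *
                  Gt ((L - Real.log (m:ℝ))/L)))
              = (dk j m : ℂ) * cexp (-(1+s) * (Real.log (m:ℝ) : ℂ)) *
                ((∑ d ∈ Finset.Icc 1 (N/m), cexp (-(1+s) * (Real.log (d:ℝ) : ℂ)) *
                  G (((L - Real.log (m:ℝ)) - Real.log (d:ℝ))/L))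
                  - L • Gt ((L - Real.log (m:ℝ))/L)) := by
            rw [Complex.real_smul]; ring
          rw [heq, norm_mul, norm_mul, Complex.norm_natCast]
          calc (dk j m : ℝ) * ‖cexp (-(1+s) * (Real.log (m:ℝ) : ℂ))‖ * ‖_‖
              ≤ (dk j m : ℝ) * (Real.exp 1/(m:ℝ)) * (60 * M) := by
                refine mul_le_mul (mul_le_mul_of_nonneg_left
                  (exp_bound1 x s hx hsre (m:ℝ) hm1 (le_trans hmz hzx))
                  (Nat.cast_nonneg _)) hTm (norm_nonneg _) (by positivity)
            _ = (60 * M * Real.exp 1) * ((dk j m : ℝ)/(m:ℝ)) := by ring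
        refine le_trans (Finset.sum_le_sum hterm) ?_
        rw [← Finset.mul_sum]
        have hdkle := dk_div_le j N
        have hlogN : Real.log (N:ℝ) ≤ L := by
          rcases Nat.eq_zero_or_pos N with h | h
          · rw [h]; simp [hL.le]
          · exact Real.log_le_log (by exact_mod_cast h) (le_trans hNz hzx)
        have h13 : (1:ℝ) ≤ Real.log 3 := by
          calc (1:ℝ) = Real.log (Real.exp 1) := (Real.log_exp 1).symm
            _ ≤ Real.log 3 := Real.log_le_log he0 (by linarith [he9])
        have hlog3x : Real.log (3*x) = Real.log 3 + Real.log x :=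
          Real.log_mul (by norm_num) (by linarith)
        have h1N : 1 + Real.log (N:ℝ) ≤ Real.log (3*x) := by
          rw [hlog3x]; linarith
        have h1N0 : 0 ≤ 1 + Real.log (N:ℝ) := by
          have : 0 ≤ Real.log (N:ℝ) := by
            rcases Nat.eq_zero_or_pos N with h | h
            · rw [h]; simp
            · exact Real.log_nonneg (by exact_mod_cast h)
          linarith
        calc (60 * M * Real.exp 1) * ∑ m ∈ Finset.Icc 1 N, (dk j m : ℝ)/(m:ℝ)
            ≤ (60 * M * Real.exp 1) * (1 + Real.log (N:ℝ))^j := by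
              refine mul_le_mul_of_nonneg_left hdkle (by positivity)
          _ ≤ (60 * M * 3) * (Real.log (3*x))^j := by
              refine mul_le_mul (by nlinarith [he9, hM0]) (pow_le_pow_left₀ h1N0 h1N j)
                (by positivity) (by positivity)
          _ = 180 * M * (Real.log (3*x))^j := by ring
      -- main term identity
      have hj' : 1 ≤ j := hj
      have e3 : (∫ v in (0:ℝ)..θ, ((v:ℝ):ℂ)^(j-1) * (cexp (-((v * L : ℝ):ℂ) * s) * Gt (1 - v)))
          = ∫ v in (0:ℝ)..θ, ((v:ℝ):ℂ)^(j-1) * ∫ t in v..θ, f t := by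
        refine intervalIntegral.integral_congr fun v _ => ?_
        rw [hGtdef]; simp only
        rw [show (1:ℝ) - (1 - v) = v from by ring]
        rw [← mul_assoc (cexp (-((v * L : ℝ):ℂ) * s)), ← Complex.exp_add,
          show -((v * L : ℝ):ℂ) * s + ((v * L : ℝ):ℂ) * s = 0 from by ring,
          Complex.exp_zero, one_mul]
      have hcoef : ((L^(j+1) / (Nat.factorial j) : ℝ)) •
            (∫ v in (0:ℝ)..θ, ((v:ℝ):ℂ)^j * (cexp (-((v * L : ℝ):ℂ) * s) * G (1 - v)))
          = (L:ℂ) * (((L^j / (Nat.factorial (j-1)) : ℝ)) •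
            ∫ v in (0:ℝ)..θ, ((v:ℝ):ℂ)^(j-1) * (cexp (-((v * L:ℝ):ℂ) * s) * Gt (1 - v))) := by
        rw [e3, ibp f hfc θ j hj']
        rw [Complex.real_smul, Complex.real_smul]
        have hfint : (∫ v in (0:ℝ)..θ, ((v:ℝ):ℂ)^j * f v)
            = ∫ v in (0:ℝ)..θ, ((v:ℝ):ℂ)^j * (cexp (-((v * L:ℝ):ℂ) * s) * G (1 - v)) := by
          refine intervalIntegral.integral_congr fun v _ => ?_
          rw [hfdef]
        rw [hfint]
        have hfac : (Nat.factorial j : ℝ) = (j : ℝ) * (Nat.factorial (j-1) : ℝ) := by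
          rw [show (Nat.factorial j) = j * (Nat.factorial (j-1)) from
            (Nat.mul_factorial_pred hj.ne').symm]
          push_cast; ring
        have hjR : ((j:ℝ)) ≠ 0 := by positivity
        have hfacR : ((Nat.factorial (j-1) : ℝ)) ≠ 0 := by positivity
        have hrr : (L^(j+1) / (Nat.factorial j) : ℝ)
            = L * (L^j / (Nat.factorial (j-1))) * (1/(j:ℝ)) := by
          rw [hfac]; field_simp; ring
        rw [hrr]
        push_cast
        ring
      simp only [Nat.add_sub_cancel]
      have hfinal : (∑ n ∈ Finset.Icc 1 N, (dk (j+1) n : ℂ) *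
            (cexp (-(1+s) * (Real.log (n:ℝ) : ℂ)) * G ((L - Real.log (n:ℝ))/L)))
          - ((L^(j+1) / (Nat.factorial j) : ℝ)) •
            (∫ v in (0:ℝ)..θ, ((v:ℝ):ℂ)^j * (cexp (-((v * L : ℝ):ℂ) * s) * G (1 - v)))
          = ((∑ n ∈ Finset.Icc 1 N, (dk (j+1) n : ℂ) *
              (cexp (-(1+s) * (Real.log (n:ℝ) : ℂ)) * G ((L - Real.log (n:ℝ))/L)))
            - (L:ℂ) * ∑ m ∈ Finset.Icc 1 N, (dk j m : ℂ) *
                (cexp (-(1+s) * (Real.log (m:ℝ) : ℂ)) * Gt ((L - Real.log (m:ℝ))/L)))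
          + (L:ℂ) * ((∑ m ∈ Finset.Icc 1 N, (dk j m : ℂ) *
                (cexp (-(1+s) * (Real.log (m:ℝ) : ℂ)) * Gt ((L - Real.log (m:ℝ))/L)))
              - ((L^j / (Nat.factorial (j-1)) : ℝ)) •
                ∫ v in (0:ℝ)..θ, ((v:ℝ):ℂ)^(j-1) *
                  (cexp (-((v * L:ℝ):ℂ) * s) * Gt (1 - v))) := by
        rw [hcoef]; ring
      rw [hfinal]
      refine le_trans (norm_add_le _ _) ?_
      have h2 : ‖(L:ℂ) * ((∑ m ∈ Finset.Icc 1 N, (dk j m : ℂ) *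
            (cexp (-(1+s) * (Real.log (m:ℝ) : ℂ)) * Gt ((L - Real.log (m:ℝ))/L)))
          - ((L^j / (Nat.factorial (j-1)) : ℝ)) •
            ∫ v in (0:ℝ)..θ, ((v:ℝ):ℂ)^(j-1) *
              (cexp (-((v * L:ℝ):ℂ) * s) * Gt (1 - v)))‖
          ≤ Real.log (3*x) * (Cj * (15*M) * (Real.log (3*x))^(j-1)) := by
        rw [norm_mul, Complex.norm_real, Real.norm_eq_abs, _root_.abs_of_nonneg hL.le]
        exact mul_le_mul hLle hIH (norm_nonneg _) hlog3'
      refine le_trans (add_le_add hsplit h2) ?_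
      have hpow : Real.log (3*x) * (Real.log (3*x))^(j-1) = (Real.log (3*x))^j := by
        rw [← pow_succ']
        congr 1
        omega
      have heq : 180 * M * (Real.log (3*x))^j
            + Real.log (3*x) * (Cj * (15*M) * (Real.log (3*x))^(j-1))
          = (15 * Cj + 180) * M * (Real.log (3*x))^j := by
        rw [← hpow]; ring
      exact le_of_eq heq

theorem stmt15 (k : ℕ) (hk : 1 ≤ k) (F H : ℝ → ℝ)
    (hF : ContDiff ℝ (⊤ : ℕ∞) F) (hH : ContDiff ℝ (⊤ : ℕ∞) H) :
    ∃ C : ℝ, 0 < C ∧ ∀ (x : ℝ) (s : ℂ), 1 < x → ‖s‖ ≤ 1 / Real.log x →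
      ‖(∑ n ∈ Finset.Icc 1 ⌊x⌋₊, (dk k n : ℂ) / (n : ℂ) ^ ((1 : ℂ) + s) *
            (F (Real.log (x / n) / Real.log x) : ℂ) *
            (H (Real.log (x / n) / Real.log x) : ℂ))
          - ((Real.log x) ^ k / (Nat.factorial (k - 1))) * (x : ℂ) ^ (-s) *
              ∫ u in (0:ℝ)..1, ((1 - u : ℝ) : ℂ) ^ (k - 1) *
                (F u : ℂ) * (H u : ℂ) * (x : ℂ) ^ ((u : ℂ) * s)‖
        ≤ C * (Real.log (3 * x)) ^ (k - 1) := by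
  obtain ⟨C, hC, spec⟩ := Lk k hk
  -- the test function
  set G : ℝ → ℂ := fun u => ((F u * H u : ℝ) : ℂ) with hGdef
  set G' : ℝ → ℂ := fun u => ((deriv F u * H u + F u * deriv H u : ℝ) : ℂ) with hG'def
  have hFd : Differentiable ℝ F := hF.differentiable (by simp)
  have hHd : Differentiable ℝ H := hH.differentiable (by simp)
  have hG : ∀ r : ℝ, HasDerivAt G (G' r) r := by
    intro r
    exact (((hFd r).hasDerivAt).mul ((hHd r).hasDerivAt)).ofReal_comp
  obtain ⟨M1, hM1⟩ := (isCompact_Icc (a := (0:ℝ)) (b := 1)).exists_bound_of_continuousOn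
    ((hF.continuous.mul hH.continuous).continuousOn)
  obtain ⟨M2, hM2⟩ := (isCompact_Icc (a := (0:ℝ)) (b := 1)).exists_bound_of_continuousOn
    (((((hF.continuous_deriv (by simp)).mul hH.continuous)).add
      (hF.continuous.mul (hH.continuous_deriv (by simp)))).continuousOn)
  set M := max M1 M2 with hMdef
  have hGb : ∀ r ∈ Set.Icc (0:ℝ) 1, ‖G r‖ ≤ M := by
    intro r hr
    rw [hGdef]; simp only [Complex.norm_real]
    exact le_trans (hM1 r hr) (le_max_left _ _)
  have hGb' : ∀ r ∈ Set.Icc (0:ℝ) 1, ‖G' r‖ ≤ M := by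
    intro r hr
    rw [hG'def]; simp only [Complex.norm_real]
    exact le_trans (hM2 r hr) (le_max_right _ _)
  have hM0 : 0 ≤ M := le_trans (norm_nonneg (G 0)) (hGb 0 ⟨le_rfl, zero_le_one⟩)
  refine ⟨C * M + 1, by positivity, ?_⟩
  intro x s hx hs
  have hL : 0 < Real.log x := Real.log_pos hx
  have hx0 : (0:ℝ) < x := by linarith
  have key := spec M G G' hG hGb hGb' x x s hx hs (le_of_lt hx) le_rfl
  -- identify the sums
  have e_sum : (∑ n ∈ Finset.Icc 1 ⌊x⌋₊, (dk k n : ℂ) / (n : ℂ) ^ ((1 : ℂ) + s) *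
        (F (Real.log (x / n) / Real.log x) : ℂ) * (H (Real.log (x / n) / Real.log x) : ℂ))
      = ∑ n ∈ Finset.Icc 1 ⌊x⌋₊, (dk k n : ℂ) *
        (cexp (-(1+s) * (Real.log (n:ℝ) : ℂ)) *
          G ((Real.log x - Real.log (n:ℝ))/Real.log x)) := by
    refine Finset.sum_congr rfl fun n hn => ?_
    rw [Finset.mem_Icc] at hn
    have hn1 : (1:ℝ) ≤ (n:ℝ) := by exact_mod_cast hn.1
    have hn0 : ((n:ℝ):ℂ) ≠ 0 := by
      simp only [ne_eq, Complex.ofReal_eq_zero]; linarith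
    have harg : Real.log (x / (n:ℝ)) = Real.log x - Real.log (n:ℝ) :=
      Real.log_div (by linarith) (by linarith)
    have hpow : ((n:ℕ) : ℂ) ^ ((1:ℂ) + s) = cexp (((1:ℂ)+s) * (Real.log (n:ℝ) : ℂ)) := by
      rw [show ((n:ℕ):ℂ) = (((n:ℝ)):ℂ) by push_cast; ring]
      rw [Complex.cpow_def_of_ne_zero hn0]
      rw [← Complex.ofReal_log (by linarith : (0:ℝ) ≤ (n:ℝ))]
      rw [mul_comm]
    rw [harg, hpow, hGdef]
    simp only
    rw [div_eq_mul_inv, ← Complex.exp_neg,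
      show -((1+s) * (Real.log (n:ℝ) : ℂ)) = -(1+s) * (Real.log (n:ℝ) : ℂ) from by ring]
    push_cast
    ring
  -- identify the main terms
  have hθ1 : Real.log x / Real.log x = 1 := div_self (ne_of_gt hL)
  have hxC : ((x:ℝ):ℂ) ≠ 0 := by
    simp only [ne_eq, Complex.ofReal_eq_zero]; linarith
  have hlogxC : (Real.log x : ℂ) = Complex.log ((x:ℝ):ℂ) := Complex.ofReal_log hx0.le
  have e_main : (((Real.log x) ^ k / (Nat.factorial (k - 1)) : ℂ)) * (x : ℂ) ^ (-s) *
        (∫ u in (0:ℝ)..1, ((1 - u : ℝ) : ℂ) ^ (k - 1) *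
          (F u : ℂ) * (H u : ℂ) * (x : ℂ) ^ ((u : ℂ) * s))
      = ((Real.log x)^k / (Nat.factorial (k-1)) : ℝ) •
        ∫ v in (0:ℝ)..(Real.log x/Real.log x),
          ((v:ℝ):ℂ)^(k-1) * (cexp (-((v * Real.log x : ℝ) : ℂ) * s) * G (1 - v)) := by
    rw [hθ1]
    have e1 : (∫ v in (0:ℝ)..1,
          ((v:ℝ):ℂ)^(k-1) * (cexp (-((v * Real.log x : ℝ) : ℂ) * s) * G (1 - v)))
        = ∫ v in (0:ℝ)..1, (fun u => ((1 - u : ℝ):ℂ)^(k-1) *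
            (cexp (-(((1 - u) * Real.log x : ℝ) : ℂ) * s) * G u)) (1 - v) := by
      refine intervalIntegral.integral_congr fun v _ => ?_
      simp only
      rw [show (1:ℝ) - (1 - v) = v from by ring]
    have e2 : (∫ v in (0:ℝ)..1, (fun u => ((1 - u : ℝ):ℂ)^(k-1) *
          (cexp (-(((1 - u) * Real.log x : ℝ) : ℂ) * s) * G u)) (1 - v))
        = ∫ u in (0:ℝ)..1, ((1 - u : ℝ):ℂ)^(k-1) *
            (cexp (-(((1 - u) * Real.log x : ℝ) : ℂ) * s) * G u) := by
      have h := intervalIntegral.integral_comp_sub_left (a := (0:ℝ)) (b := (1:ℝ))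
        (fun u => ((1 - u : ℝ):ℂ)^(k-1) *
          (cexp (-(((1 - u) * Real.log x : ℝ) : ℂ) * s) * G u)) 1
      simp only [sub_self, sub_zero] at h
      exact h
    have e3 : (∫ u in (0:ℝ)..1, ((1 - u : ℝ):ℂ)^(k-1) *
          (cexp (-(((1 - u) * Real.log x : ℝ) : ℂ) * s) * G u))
        = ∫ u in (0:ℝ)..1, (x:ℂ)^(-s) * (((1 - u : ℝ) : ℂ) ^ (k - 1) *
            (F u : ℂ) * (H u : ℂ) * (x : ℂ) ^ ((u : ℂ) * s)) := by
      refine intervalIntegral.integral_congr fun u _ => ?_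
      rw [hGdef]; simp only
      rw [Complex.cpow_def_of_ne_zero hxC, Complex.cpow_def_of_ne_zero hxC, ← hlogxC]
      rw [show -(((1 - u) * Real.log x : ℝ) : ℂ) * s
          = (Real.log x : ℂ) * (-s) + (Real.log x : ℂ) * ((u:ℂ) * s) by push_cast; ring]
      rw [Complex.exp_add]
      push_cast
      ring
    rw [e1, e2, e3, intervalIntegral.integral_const_mul, Complex.real_smul]
    push_cast
    ring
  rw [e_sum, e_main]
  refine key.trans ?_
  have hpow0 : (0:ℝ) ≤ (Real.log (3*x))^(k-1) := by
    have h3 : (0:ℝ) ≤ Real.log (3*x) := Real.log_nonneg (by nlinarith)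
    positivity
  nlinarith [hpow0, mul_nonneg (mul_nonneg hC.le hM0) hpow0]
end
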